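/- arXiv:1906.02774 — 6 statements merged into one kernel-verified Lean document; each statement's English description precedes it below -/
import Mathlib

section
/- If n = r·λ for some positive integer r and P_n is the path graph on n vertices, then p*(P_n) = λ/n, i.e., there exists a defense strategy under which every vertex is covered with probability exactly λ/n. -/
open Finset

variable {V : Type*}

/-- A λ-subgraph: a set of `lam` vertices inducing a connected subgraph of `G`. -/
def IsLamSub (G : SimpleGraph V) (lam : ℕ) (s : Finset V) : Prop :=
  s.card = lam ∧ (G.induce (s : Set V)).Connected

/-- A defense strategy: a probability distribution over λ-subgraphs of `G`. -/
def IsDefStrat [Fintype V] [DecidableEq V] (G : SimpleGraph V) (lam : ℕ)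
    (q : Finset V → ℝ) : Prop :=
  (∀ s, 0 ≤ q s) ∧ (∀ s, q s ≠ 0 → IsLamSub G lam s) ∧ ∑ s : Finset V, q s = 1

/-- The probability that vertex `i` is covered under strategy `q`. -/
def vertexProb [Fintype V] [DecidableEq V] (q : Finset V → ℝ) (i : V) : ℝ :=
  ∑ s : Finset V, if i ∈ s then q s else 0

/-- The MaxMin probability `p*(G)`: maximum over defense strategies of the
minimum vertex probability. -/
noncomputable def pstar [Fintype V] [DecidableEq V] (G : SimpleGraph V) (lam : ℕ) : ℝ :=
  sSup {x : ℝ | ∃ q, IsDefStrat G lam q ∧ x = ⨅ i, vertexProb q i}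

/-- Reachability along an interval contained in a vertex set of the path graph. -/
lemma path_reach {n : ℕ} (s : Set (Fin n)) :
    ∀ d (u v : s), v.1.val = u.1.val + d →
      (∀ w : Fin n, u.1.val ≤ w.val → w.val ≤ v.1.val → w ∈ s) →
      ((SimpleGraph.pathGraph n).induce s).Reachable u v := by
  intro d
  induction d with
  | zero =>
    intro u v h _
    have : u = v := by
      ext1; exact Fin.ext h.symm
    exact this ▸ SimpleGraph.Reachable.refl u
  | succ d ih =>
    intro u v h hall
    have hwlt : u.1.val + 1 < n := lt_of_le_of_lt (by omega) v.1.isLt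
    set w : Fin n := ⟨u.1.val + 1, hwlt⟩ with hw
    have hws : w ∈ s := hall w (by simp [hw]) (by show u.1.val + 1 ≤ v.1.val; omega)
    have hadj : ((SimpleGraph.pathGraph n).induce s).Adj u ⟨w, hws⟩ := by
      show (SimpleGraph.pathGraph n).Adj u.1 w
      rw [SimpleGraph.pathGraph_adj]
      left; simp [hw]
    refine hadj.reachable.trans (ih ⟨w, hws⟩ v (by simp [hw]; omega) ?_)
    intro x hx1 hx2
    exact hall x (by simp [hw] at hx1 ⊢; omega) hx2

theorem stmt2 (n r lam : ℕ) (hr : 0 < r) (hlam : 0 < lam) (hn : n = r * lam) :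
    pstar (SimpleGraph.pathGraph n) lam = (lam : ℝ) / n ∧
      ∃ q, IsDefStrat (SimpleGraph.pathGraph n) lam q ∧
        ∀ i, vertexProb q i = (lam : ℝ) / n := by
  classical
  have hnpos : 0 < n := hn ▸ Nat.mul_pos hr hlam
  haveI : Nonempty (Fin n) := ⟨⟨0, hnpos⟩⟩
  -- blocks
  have hblk : ∀ k : ℕ, ∀ m ∈ Finset.Ico (k * lam) (k * lam + lam) ∩ Finset.range n, m < n := by
    intro k m hm
    simp only [Finset.mem_inter, Finset.mem_range] at hm
    exact hm.2
  set block : ℕ → Finset (Fin n) := fun k =>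
    (Finset.Ico (k * lam) (k * lam + lam) ∩ Finset.range n).attachFin (hblk k) with hblock
  have hmem : ∀ k (i : Fin n), i ∈ block k ↔ k * lam ≤ i.val ∧ i.val < k * lam + lam := by
    intro k i
    simp [hblock, Finset.mem_attachFin, Finset.mem_inter, Finset.mem_Ico, Finset.mem_range,
      i.isLt, and_assoc]
  have hmemself : ∀ i : Fin n, i ∈ block (i.val / lam) := by
    intro i
    rw [hmem]
    refine ⟨Nat.div_mul_le_self _ _, ?_⟩
    have h2 : i.val < (i.val / lam + 1) * lam :=
      (Nat.div_lt_iff_lt_mul hlam).mp (Nat.lt_succ_self _)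
    rw [Nat.add_mul, one_mul] at h2
    omega
  have hdivlt : ∀ i : Fin n, i.val / lam < r := by
    intro i
    rw [Nat.div_lt_iff_lt_mul hlam]
    exact hn ▸ i.isLt
  have huniq : ∀ k (i : Fin n), i ∈ block k → k = i.val / lam := by
    intro k i hi
    rw [hmem] at hi
    symm
    exact Nat.div_eq_of_lt_le hi.1 (by rw [Nat.add_mul, one_mul]; omega)
  have hkn : ∀ k < r, k * lam + lam ≤ n := by
    intro k hk
    rw [hn]
    calc k * lam + lam = (k + 1) * lam := by ring
    _ ≤ r * lam := Nat.mul_le_mul_right _ hk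
  have hcard : ∀ k < r, (block k).card = lam := by
    intro k hk
    have hsub : Finset.Ico (k * lam) (k * lam + lam) ⊆ Finset.range n := by
      intro m hm
      simp only [Finset.mem_Ico] at hm
      simp only [Finset.mem_range]
      have := hkn k hk
      omega
    rw [hblock]
    simp only [Finset.card_attachFin]
    rw [Finset.inter_eq_left.mpr hsub]
    simp
  -- connectivity of each block
  have hconn : ∀ k < r, ((SimpleGraph.pathGraph n).induce
      ((block k : Finset (Fin n)) : Set (Fin n))).Connected := by
    intro k hk
    have hklt : k * lam < n := by have := hkn k hk; omega
    have hbase : (⟨k * lam, hklt⟩ : Fin n) ∈ block k := by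
      rw [hmem]
      show k * lam ≤ k * lam ∧ k * lam < k * lam + lam
      omega
    rw [SimpleGraph.connected_iff]
    refine ⟨?_, ⟨⟨_, by simpa using hbase⟩⟩⟩
    intro u v
    have hu := (hmem k u.1).mp (by exact_mod_cast u.2)
    have hv := (hmem k v.1).mp (by exact_mod_cast v.2)
    rcases le_total u.1.val v.1.val with hle | hle
    · obtain ⟨d, hd⟩ := Nat.exists_eq_add_of_le hle
      refine path_reach _ d u v hd ?_
      intro w h1 h2
      simp only [Finset.coe_sort_coe, Finset.mem_coe]
      rw [hmem]; omega
    · obtain ⟨d, hd⟩ := Nat.exists_eq_add_of_le hle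
      refine (path_reach _ d v u hd ?_).symm
      intro w h1 h2
      simp only [Finset.coe_sort_coe, Finset.mem_coe]
      rw [hmem]; omega
  -- the strategy
  set B : Finset (Finset (Fin n)) := (Finset.range r).image block with hB
  have hblkinj : ∀ k < r, ∀ k' < r, block k = block k' → k = k' := by
    intro k hk k' hk' he
    have hklt : k * lam < n := by have := hkn k hk; omega
    have hb : (⟨k * lam, hklt⟩ : Fin n) ∈ block k := by
      rw [hmem]
      show k * lam ≤ k * lam ∧ k * lam < k * lam + lam
      omega
    have hb' : (⟨k * lam, hklt⟩ : Fin n) ∈ block k' := he ▸ hb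
    have h1 := huniq k _ hb
    have h2 := huniq k' _ hb'
    omega
  have hcardB : B.card = r := by
    rw [hB, Finset.card_image_of_injOn, Finset.card_range]
    intro a ha b hb he
    simp only [Finset.coe_range, Set.mem_Iio] at ha hb
    exact hblkinj a ha b hb he
  set q : Finset (Fin n) → ℝ := fun s => if s ∈ B then (r : ℝ)⁻¹ else 0 with hq
  have hrne : (r : ℝ) ≠ 0 := Nat.cast_ne_zero.mpr hr.ne'
  have hstrat : IsDefStrat (SimpleGraph.pathGraph n) lam q := by
    refine ⟨?_, ?_, ?_⟩
    · intro s; rw [hq]; dsimp only; split <;> positivity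
    · intro s hs
      rw [hq] at hs
      dsimp only at hs
      have hsB : s ∈ B := by by_contra h; simp [h] at hs
      rw [hB] at hsB
      obtain ⟨k, hk, he⟩ := Finset.mem_image.mp hsB
      rw [Finset.mem_range] at hk
      subst he
      exact ⟨hcard k hk, hconn k hk⟩
    · rw [hq]
      dsimp only
      rw [Finset.sum_ite_mem, Finset.univ_inter, Finset.sum_const, hcardB,
        nsmul_eq_mul, mul_inv_cancel₀ hrne]
  have hlamn : (lam : ℝ) / n = (r : ℝ)⁻¹ := by
    rw [hn]
    push_cast
    rw [mul_comm, ← div_div, div_self (by positivity : (lam : ℝ) ≠ 0), one_div]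
  -- vertex probabilities
  have hvp : ∀ i : Fin n, vertexProb q i = (r : ℝ)⁻¹ := by
    intro i
    rw [vertexProb, Finset.sum_eq_single (block (i.val / lam))]
    · rw [if_pos (hmemself i), hq]
      dsimp only
      rw [if_pos]
      rw [hB]
      exact Finset.mem_image.mpr ⟨_, Finset.mem_range.mpr (hdivlt i), rfl⟩
    · intro s _ hs
      by_cases hi : i ∈ s
      · rw [if_pos hi, hq]
        dsimp only
        rw [if_neg]
        intro hsB
        rw [hB] at hsB
        obtain ⟨k, hk, he⟩ := Finset.mem_image.mp hsB
        exact hs (by rw [← he, huniq k i (he ▸ hi)])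
      · rw [if_neg hi]
    · intro h
      exact absurd (Finset.mem_univ _) h
  -- upper bound
  have hub : ∀ p, IsDefStrat (SimpleGraph.pathGraph n) lam p →
      (⨅ i, vertexProb p i) ≤ (lam : ℝ) / n := by
    rintro p ⟨hp0, hpsupp, hpsum⟩
    have hsum : ∑ i : Fin n, vertexProb p i = lam := by
      simp_rw [vertexProb]
      rw [Finset.sum_comm]
      have h1 : ∀ s : Finset (Fin n),
          (∑ i : Fin n, if i ∈ s then p s else 0) = (lam : ℝ) * p s := by
        intro s
        rw [Finset.sum_ite_mem, Finset.univ_inter, Finset.sum_const, nsmul_eq_mul]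
        by_cases h : p s = 0
        · simp [h]
        · rw [(hpsupp s h).1]
      rw [Finset.sum_congr rfl (fun s _ => h1 s), ← Finset.mul_sum, hpsum, mul_one]
    have hmin : ∀ i, (⨅ j, vertexProb p j) ≤ vertexProb p i := fun i =>
      ciInf_le (Set.Finite.bddBelow (Set.finite_range _)) i
    by_contra hcon
    push_neg at hcon
    have hkey : (n : ℝ) * ((lam : ℝ) / n) < ∑ i : Fin n, vertexProb p i := by
      calc (n : ℝ) * ((lam : ℝ) / n) < (n : ℝ) * (⨅ i, vertexProb p i) :=
            mul_lt_mul_of_pos_left hcon (by positivity)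
      _ = ∑ _i : Fin n, (⨅ j, vertexProb p j) := by
            rw [Finset.sum_const, Finset.card_univ, Fintype.card_fin, nsmul_eq_mul]
      _ ≤ ∑ i, vertexProb p i := Finset.sum_le_sum (fun i _ => hmin i)
    have heq : (n : ℝ) * ((lam : ℝ) / n) = lam := by
      field_simp
    rw [hsum, heq] at hkey
    exact lt_irrefl _ hkey
  have hmemset : (lam : ℝ) / n ∈
      {x : ℝ | ∃ p, IsDefStrat (SimpleGraph.pathGraph n) lam p ∧ x = ⨅ i, vertexProb p i} := by
    refine ⟨q, hstrat, ?_⟩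
    simp_rw [hvp]
    rw [ciInf_const, hlamn]
  refine ⟨?_, q, hstrat, fun i => by rw [hvp i, hlamn]⟩
  rw [pstar]
  apply le_antisymm
  · apply csSup_le ⟨_, hmemset⟩
    rintro x ⟨p, hp, rfl⟩
    exact hub p hp
  · refine le_csSup ⟨(lam : ℝ) / n, ?_⟩ hmemset
    rintro x ⟨p, hp, rfl⟩
    exact hub p hp
end

section
/- For any cycle graph C_n on n vertices and any 1 ≤ λ ≤ n-1, there exists a defense strategy under which every vertex is covered with probability exactly λ/n; consequently p*(C_n) = λ/n and C_n is defense-optimal. -/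
open Finset

variable {V : Type*}

open Fin.NatCast Fin.CommRing

section Aux

variable (n lam : ℕ) [NeZero n]

/-- The arc of `lam` consecutive vertices starting at `i`. -/
def arcOf (i : Fin n) : Finset (Fin n) :=
  (Finset.range lam).image (fun k : ℕ => i + (k : Fin n))

lemma castFin_inj (hn : 0 < n) {a b : ℕ} (ha : a < n) (hb : b < n)
    (h : (a : Fin n) = (b : Fin n)) : a = b := by
  have := congrArg Fin.val h
  rwa [Fin.val_cast_of_lt ha, Fin.val_cast_of_lt hb] at this

lemma arcOf_card (hlam : lam < n) (i : Fin n) : (arcOf n lam i).card = lam := by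
  rw [arcOf, Finset.card_image_of_injOn, Finset.card_range]
  intro a ha b hb hab
  simp only [Finset.coe_range, Set.mem_Iio] at ha hb
  exact castFin_inj n (by omega) (ha.trans hlam) (hb.trans hlam) (add_left_cancel hab)

lemma mem_arcOf {i x : Fin n} : x ∈ arcOf n lam i ↔ ∃ k, k < lam ∧ x = i + (k : Fin n) := by
  simp only [arcOf, Finset.mem_image, Finset.mem_range]
  constructor
  · rintro ⟨k, hk, rfl⟩; exact ⟨k, hk, rfl⟩
  · rintro ⟨k, hk, rfl⟩; exact ⟨k, hk, rfl⟩

lemma arcOf_connected (hn : 2 ≤ n) (hlam1 : 1 ≤ lam) (i : Fin n) :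
    ((SimpleGraph.cycleGraph n).induce ((arcOf n lam i : Finset (Fin n)) : Set (Fin n))).Connected := by
  have h0 : i ∈ arcOf n lam i := by
    rw [mem_arcOf]; exact ⟨0, by omega, by simp⟩
  have key : ∀ k (hk : k < lam),
      ((SimpleGraph.cycleGraph n).induce ((arcOf n lam i : Finset (Fin n)) : Set (Fin n))).Reachable
        ⟨i, h0⟩ ⟨i + (k : Fin n), (mem_arcOf n lam).mpr ⟨k, hk, rfl⟩⟩ := by
    intro k
    induction k with
    | zero =>
      intro _
      convert SimpleGraph.Reachable.refl
        (⟨i, h0⟩ : ((arcOf n lam i : Finset (Fin n)) : Set (Fin n))) using 2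
      simp
    | succ k ih =>
      intro hk
      have hk' : k < lam := by omega
      refine (ih hk').trans (SimpleGraph.Adj.reachable ?_)
      have hadj : (SimpleGraph.cycleGraph n).Adj (i + (k : Fin n)) (i + ((k + 1 : ℕ) : Fin n)) := by
        rw [SimpleGraph.cycleGraph_adj']
        right
        have h1 : (i + ((k + 1 : ℕ) : Fin n)) - (i + (k : Fin n)) = 1 := by push_cast; ring
        rw [h1, Fin.val_one', Nat.mod_eq_of_lt hn]
      exact hadj
  rw [SimpleGraph.connected_iff]
  refine ⟨?_, ⟨⟨i, h0⟩⟩⟩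
  rintro ⟨u, hu⟩ ⟨v, hv⟩
  obtain ⟨a, ha, hua⟩ := (mem_arcOf n lam).mp (Finset.mem_coe.mp hu)
  obtain ⟨b, hb, hvb⟩ := (mem_arcOf n lam).mp (Finset.mem_coe.mp hv)
  have e1 : (⟨u, hu⟩ : ((arcOf n lam i : Finset (Fin n)) : Set (Fin n))) =
      ⟨i + (a : Fin n), (mem_arcOf n lam).mpr ⟨a, ha, rfl⟩⟩ := Subtype.ext hua
  have e2 : (⟨v, hv⟩ : ((arcOf n lam i : Finset (Fin n)) : Set (Fin n))) =
      ⟨i + (b : Fin n), (mem_arcOf n lam).mpr ⟨b, hb, rfl⟩⟩ := Subtype.ext hvb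
  rw [e1, e2]
  exact (key a ha).symm.trans (key b hb)

lemma sum_vertexProb (q : Finset (Fin n) → ℝ)
    (hlam : ∀ s, q s ≠ 0 → s.card = lam) (hsum : ∑ s : Finset (Fin n), q s = 1) :
    ∑ i : Fin n, vertexProb q i = lam := by
  unfold vertexProb
  rw [Finset.sum_comm]
  have h1 : ∀ s : Finset (Fin n), ∑ i : Fin n, (if i ∈ s then q s else 0)
      = (s.card : ℝ) * q s := by
    intro s
    rw [Finset.sum_ite_mem, Finset.univ_inter, Finset.sum_const, nsmul_eq_mul]
  rw [Finset.sum_congr rfl fun s _ => h1 s]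
  have h2 : ∀ s : Finset (Fin n), (s.card : ℝ) * q s = (lam : ℝ) * q s := by
    intro s
    by_cases h : q s = 0
    · rw [h, mul_zero, mul_zero]
    · rw [hlam s h]
  rw [Finset.sum_congr rfl fun s _ => h2 s, ← Finset.mul_sum, hsum, mul_one]

end Aux

theorem stmt3 (n lam : ℕ) (h1 : 1 ≤ lam) (h2 : lam ≤ n - 1) :
    (∃ q, IsDefStrat (SimpleGraph.cycleGraph n) lam q ∧
        ∀ i, vertexProb q i = (lam : ℝ) / n) ∧
      pstar (SimpleGraph.cycleGraph n) lam = (lam : ℝ) / n := by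
  have hn : 2 ≤ n := by omega
  have hlt : lam < n := by omega
  haveI : NeZero n := ⟨by omega⟩
  have hnR : (0 : ℝ) < (n : ℝ) := by exact_mod_cast (by omega : 0 < n)
  set q : Finset (Fin n) → ℝ :=
    fun s => (∑ i : Fin n, if arcOf n lam i = s then (1 : ℝ) else 0) / n with hq
  have hq0 : ∀ s, 0 ≤ q s := by
    intro s
    apply div_nonneg _ hnR.le
    apply Finset.sum_nonneg
    intro i _
    positivity
  have hqsum : ∑ s : Finset (Fin n), q s = 1 := by
    rw [hq]
    simp only
    rw [← Finset.sum_div, Finset.sum_comm]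
    have h : ∀ i : Fin n,
        ∑ s : Finset (Fin n), (if arcOf n lam i = s then (1 : ℝ) else 0) = 1 := by
      intro i
      rw [Finset.sum_ite_eq]
      simp
    rw [Finset.sum_congr rfl fun i _ => h i, Finset.sum_const, Finset.card_univ,
      Fintype.card_fin, nsmul_eq_mul, mul_one, div_self hnR.ne']
  have hqlam : ∀ s, q s ≠ 0 → IsLamSub (SimpleGraph.cycleGraph n) lam s := by
    intro s hs
    have hex : ∃ i : Fin n, arcOf n lam i = s := by
      by_contra hc
      push_neg at hc
      apply hs
      rw [hq]
      simp only
      rw [Finset.sum_eq_zero, zero_div]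
      intro i _
      rw [if_neg (hc i)]
    obtain ⟨i, rfl⟩ := hex
    exact ⟨arcOf_card n lam hlt i, arcOf_connected n lam hn h1 i⟩
  have hvp : ∀ i0 : Fin n, vertexProb q i0 = (lam : ℝ) / n := by
    intro i0
    rw [vertexProb]
    have step1 : ∀ s : Finset (Fin n), (if i0 ∈ s then q s else 0)
        = (∑ i : Fin n, if arcOf n lam i = s ∧ i0 ∈ s then (1 : ℝ) else 0) / n := by
      intro s
      rw [hq]
      simp only
      by_cases h : i0 ∈ s
      · simp [h]
      · simp [h]
    rw [Finset.sum_congr rfl fun s _ => step1 s, ← Finset.sum_div, Finset.sum_comm]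
    have step2 : ∀ i : Fin n,
        ∑ s : Finset (Fin n), (if arcOf n lam i = s ∧ i0 ∈ s then (1 : ℝ) else 0)
        = if i0 ∈ arcOf n lam i then (1 : ℝ) else 0 := by
      intro i
      rw [Finset.sum_eq_single (arcOf n lam i)]
      · by_cases h : i0 ∈ arcOf n lam i <;> simp [h]
      · intro s _ hs
        rw [if_neg]
        rintro ⟨h, _⟩
        exact hs h.symm
      · intro h
        exact absurd (Finset.mem_univ _) h
    rw [Finset.sum_congr rfl fun i _ => step2 i, Finset.sum_boole]
    congr 1
    have hfe : Finset.univ.filter (fun i => i0 ∈ arcOf n lam i)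
        = (Finset.range lam).image (fun k : ℕ => i0 - (k : Fin n)) := by
      ext i
      simp only [Finset.mem_filter, Finset.mem_univ, true_and, Finset.mem_image,
        Finset.mem_range, mem_arcOf]
      constructor
      · rintro ⟨k, hk, hik⟩
        exact ⟨k, hk, by rw [hik]; ring⟩
      · rintro ⟨k, hk, rfl⟩
        exact ⟨k, hk, by ring⟩
    rw [hfe, Finset.card_image_of_injOn, Finset.card_range]
    intro a ha b hb hab
    simp only [Finset.coe_range, Set.mem_Iio] at ha hb
    exact castFin_inj n (by omega) (ha.trans hlt) (hb.trans hlt) (by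
      have := sub_right_inj.mp hab
      exact this)
  have hstrat : IsDefStrat (SimpleGraph.cycleGraph n) lam q := ⟨hq0, hqlam, hqsum⟩
  haveI hne : Nonempty (Fin n) := ⟨⟨0, by omega⟩⟩
  refine ⟨⟨q, hstrat, hvp⟩, ?_⟩
  have hmem : (lam : ℝ) / n ∈ {x : ℝ | ∃ q',
      IsDefStrat (SimpleGraph.cycleGraph n) lam q' ∧ x = ⨅ i, vertexProb q' i} := by
    refine ⟨q, hstrat, ?_⟩
    simp only [hvp]
    exact (ciInf_const).symm
  have hub : ∀ x ∈ {x : ℝ | ∃ q',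
      IsDefStrat (SimpleGraph.cycleGraph n) lam q' ∧ x = ⨅ i, vertexProb q' i},
      x ≤ (lam : ℝ) / n := by
    rintro x ⟨q', ⟨hq0', hql', hsum'⟩, rfl⟩
    have hsumv : ∑ i : Fin n, vertexProb q' i = lam :=
      sum_vertexProb n lam q' (fun s hs => (hql' s hs).1) hsum'
    have hex : ∃ i : Fin n, vertexProb q' i ≤ (lam : ℝ) / n := by
      by_contra hc
      push_neg at hc
      have hlt2 : (lam : ℝ) < ∑ i : Fin n, vertexProb q' i := by
        calc (lam : ℝ) = ∑ _i : Fin n, (lam : ℝ) / n := by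
              rw [Finset.sum_const, Finset.card_univ, Fintype.card_fin, nsmul_eq_mul]
              field_simp
          _ < _ := Finset.sum_lt_sum_of_nonempty Finset.univ_nonempty fun i _ => hc i
      linarith [hsumv]
    obtain ⟨i, hi⟩ := hex
    exact le_trans (ciInf_le (Set.finite_range _).bddBelow i) hi
  rw [pstar]
  exact le_antisymm (csSup_le ⟨_, hmem⟩ hub) (le_csSup ⟨(lam : ℝ) / n, hub⟩ hmem)
end

section
/- If a graph G on n vertices can be partitioned into n/λ pairwise disjoint λ-subgraphs (connected induced subgraphs of size λ covering all vertices), then p*(G) = λ/n, i.e., G is defense-optimal. -/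
/-!
Summing the coverage probabilities over all vertices counts every λ-subgraph of a strategy
λ times, so they add up to λ and the least of them is at most λ/n. Conversely, the uniform
distribution on the n/λ parts of a partition into λ-subgraphs covers each vertex exactly
through its own part, with probability λ/n.
-/

open Finset

variable {V : Type*}

section DefenseStrategies

variable [Fintype V] [DecidableEq V] {G : SimpleGraph V} {lam : ℕ} {q : Finset V → ℝ}

theorem IsDefStrat.sum_vertexProb (hq : IsDefStrat G lam q) :
    ∑ i, vertexProb q i = lam := by
  have hcover (s : Finset V) : ∑ i, (if i ∈ s then q s else 0) = lam * q s := by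
    rw [sum_ite_mem, univ_inter, sum_const, nsmul_eq_mul]
    rcases eq_or_ne (q s) 0 with h | h
    · simp [h]
    · rw [(hq.2.1 s h).1]
  simp only [vertexProb]
  rw [sum_comm, sum_congr rfl fun s _ => hcover s, ← mul_sum, hq.2.2, mul_one]

theorem IsDefStrat.iInf_vertexProb_le [Nonempty V] (hq : IsDefStrat G lam q) :
    ⨅ i, vertexProb q i ≤ lam / Fintype.card V := by
  have hle (i : V) : ⨅ j, vertexProb q j ≤ vertexProb q i :=
    ciInf_le (Set.finite_range _).bddBelow i
  have hmul : Fintype.card V * ⨅ i, vertexProb q i ≤ lam :=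
    calc Fintype.card V * ⨅ i, vertexProb q i = ∑ _i : V, ⨅ j, vertexProb q j := by
          rw [sum_const, card_univ, nsmul_eq_mul]
      _ ≤ ∑ i, vertexProb q i := sum_le_sum fun i _ => hle i
      _ = lam := hq.sum_vertexProb
  rw [le_div_iff₀ (by exact_mod_cast Fintype.card_pos)]
  linarith

theorem pstar_le [Nonempty V] : pstar G lam ≤ lam / Fintype.card V :=
  Real.sSup_le (by rintro x ⟨q, hq, rfl⟩; exact hq.iInf_vertexProb_le) (by positivity)

theorem pstar_eq_of_vertexProb_eq [Nonempty V] (hq : IsDefStrat G lam q)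
    (hunif : ∀ i, vertexProb q i = lam / Fintype.card V) :
    pstar G lam = lam / Fintype.card V := by
  refine pstar_le.antisymm (le_csSup ⟨lam / Fintype.card V, ?_⟩ ⟨q, hq, ?_⟩)
  · rintro x ⟨q', hq', rfl⟩
    exact hq'.iInf_vertexProb_le
  · simp only [hunif, ciInf_const]

end DefenseStrategies

section UniformStrategy

variable [Fintype V] [DecidableEq V] {G : SimpleGraph V} {lam : ℕ} {P : Finset (Finset V)}

noncomputable def uniformStrat (P : Finset (Finset V)) (s : Finset V) : ℝ :=
  if s ∈ P then (#P : ℝ)⁻¹ else 0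

theorem isDefStrat_uniformStrat (hP : P.Nonempty) (hsub : ∀ s ∈ P, IsLamSub G lam s) :
    IsDefStrat G lam (uniformStrat P) := by
  refine ⟨fun s => ?_, fun s hs => ?_, ?_⟩
  · unfold uniformStrat
    positivity
  · by_cases hsP : s ∈ P
    · exact hsub s hsP
    · exact absurd (if_neg hsP) hs
  · simp only [uniformStrat]
    rw [sum_ite_mem, univ_inter, sum_const, nsmul_eq_mul]
    exact mul_inv_cancel₀ (by exact_mod_cast hP.card_pos.ne')

theorem vertexProb_uniformStrat (i : V) :
    vertexProb (uniformStrat P) i = #{s ∈ P | i ∈ s} / #P := by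
  simp only [vertexProb, uniformStrat, ← ite_and, ← sum_filter, sum_const, nsmul_eq_mul,
    div_eq_mul_inv]
  congr 3
  ext s
  simp [and_comm]

end UniformStrategy

theorem card_filter_mem_eq_one_of_pairwiseDisjoint [DecidableEq V] {P : Finset (Finset V)}
    (hdisj : (P : Set (Finset V)).PairwiseDisjoint id) {i : V} (hi : i ∈ P.sup id) :
    #{s ∈ P | i ∈ s} = 1 := by
  obtain ⟨s, hsP, his⟩ := mem_sup.mp hi
  refine card_eq_one.mpr ⟨s, eq_singleton_iff_unique_mem.mpr ⟨mem_filter.mpr ⟨hsP, his⟩, ?_⟩⟩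
  intro t ht
  obtain ⟨htP, hit⟩ := mem_filter.mp ht
  by_contra hts
  exact disjoint_left.mp (hdisj htP hsP hts) hit his

theorem stmt5_general [Fintype V] [DecidableEq V] [Nonempty V] (G : SimpleGraph V) (lam : ℕ)
    (P : Finset (Finset V))
    (hP1 : ∀ s ∈ P, IsLamSub G lam s)
    (hP2 : (P : Set (Finset V)).PairwiseDisjoint id)
    (hP3 : P.sup id = Finset.univ)
    (hcard : P.card * lam = Fintype.card V) :
    pstar G lam = (lam : ℝ) / Fintype.card V ∧
      ∃ q, IsDefStrat G lam q ∧
        ∀ i, vertexProb q i = (lam : ℝ) / Fintype.card V := by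
  have hpos : 0 < #P * lam := hcard ▸ Fintype.card_pos
  have hlam : (lam : ℝ) ≠ 0 := by exact_mod_cast (Nat.pos_of_mul_pos_left hpos).ne'
  have hunif (i : V) : vertexProb (uniformStrat P) i = lam / Fintype.card V := by
    rw [vertexProb_uniformStrat, card_filter_mem_eq_one_of_pairwiseDisjoint hP2 (hP3 ▸ mem_univ i),
      ← hcard, Nat.cast_mul, Nat.cast_one, mul_comm, ← div_div, div_self hlam]
  have hstrat := isDefStrat_uniformStrat (card_pos.mp (Nat.pos_of_mul_pos_right hpos)) hP1
  exact ⟨pstar_eq_of_vertexProb_eq hstrat hunif, uniformStrat P, hstrat, hunif⟩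

theorem stmt5 [Fintype V] [DecidableEq V] [Nonempty V] (G : SimpleGraph V) (lam : ℕ)
    (h1 : 1 ≤ lam) (P : Finset (Finset V))
    (hP1 : ∀ s ∈ P, IsLamSub G lam s)
    (hP2 : (P : Set (Finset V)).PairwiseDisjoint id)
    (hP3 : P.sup id = Finset.univ)
    (hcard : P.card * lam = Fintype.card V) :
    pstar G lam = (lam : ℝ) / Fintype.card V ∧
      ∃ q, IsDefStrat G lam q ∧
        ∀ i, vertexProb q i = (lam : ℝ) / Fintype.card V :=
  stmt5_general G lam P hP1 hP2 hP3 hcard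
end

section
/- A tree T on n vertices is defense-optimal (p*(T) = λ/n) if and only if the vertex set of T can be partitioned into n/λ pairwise disjoint λ-subgraphs (connected subtrees with exactly λ vertices each). -/
open Finset

variable {V : Type*}

namespace DefenseAux

open SimpleGraph

/-- The graph `G` restricted to edges inside `B`. -/
def rst (G : SimpleGraph V) (B : Finset V) : SimpleGraph V where
  Adj a b := G.Adj a b ∧ a ∈ B ∧ b ∈ B
  symm := ⟨fun a b h => ⟨h.1.symm, h.2.2, h.2.1⟩⟩
  loopless := ⟨fun a h => G.loopless.irrefl a h.1⟩

variable {G : SimpleGraph V} {B C : Finset V}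

lemma rst_mono (h : B ⊆ C) : rst G B ≤ rst G C :=
  fun _ _ hab => ⟨hab.1, h hab.2.1, h hab.2.2⟩

lemma support_mem : ∀ {a b : V} (w : (rst G B).Walk a b), ∀ v ∈ w.support, v = a ∨ v ∈ B := by
  intro a b w
  induction w with
  | nil =>
    intro v hv
    rw [Walk.support_nil, List.mem_singleton] at hv
    exact Or.inl hv
  | cons h p ih =>
    intro v hv
    rw [Walk.support_cons, List.mem_cons] at hv
    rcases hv with rfl | hv
    · exact Or.inl rfl
    · rcases ih v hv with rfl | hv'
      · exact Or.inr h.2.2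
      · exact Or.inr hv'

lemma end_cases {a b : V} (h : (rst G B).Reachable a b) : b = a ∨ b ∈ B := by
  obtain ⟨w⟩ := h
  exact support_mem w b w.end_mem_support

lemma transfer : ∀ {a b : V} (w : (rst G B).Walk a b),
    (∀ v ∈ w.support, v ∈ C) → (rst G C).Reachable a b := by
  intro a b w
  induction w with
  | nil => exact fun _ => Reachable.refl _
  | cons h p ih =>
    intro hs
    have h1 : (rst G C).Adj _ _ :=
      ⟨h.1, hs _ (by simp), hs _ (by simp [Walk.start_mem_support])⟩
    exact h1.reachable.trans (ih fun v hv => hs v (by simp [hv]))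

/-- The inclusion homomorphism from `rst G B` to `G`. -/
def rstHom (G : SimpleGraph V) (B : Finset V) : rst G B →g G :=
  SimpleGraph.Hom.ofLE (fun _ _ h => h.1)

lemma not_reach_p [DecidableEq V] (hG : G.IsAcyclic) {A : Finset V} {u p x : V}
    (hup : G.Adj u p) (hx : (rst G (A.erase p)).Reachable u x) :
    ¬ (rst G (A.erase u)).Reachable x p := by
  intro hxp
  obtain ⟨w1⟩ := hx
  obtain ⟨w2⟩ := hxp
  by_cases hxu : x = u
  · subst hxu
    cases w2 with
    | nil => exact hup.ne rfl
    | cons h _ => exact Finset.notMem_erase _ _ h.2.1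
  · have hb := (SimpleGraph.isBridge_iff.mp
      (SimpleGraph.isAcyclic_iff_forall_adj_isBridge.mp hG hup))
    apply hb
    rw [SimpleGraph.reachable_delete_edges_iff_exists_walk]
    refine ⟨(w1.map (rstHom G _)).append (w2.map (rstHom G _)), ?_⟩
    intro hmem
    erw [SimpleGraph.Walk.edges_append, List.mem_append] at hmem
    rcases hmem with hmem | hmem
    · have hp := SimpleGraph.Walk.snd_mem_support_of_mem_edges _ hmem
      erw [SimpleGraph.Walk.support_map] at hp
      rcases support_mem w1 p (by simpa [rstHom, SimpleGraph.Hom.ofLE_apply] using hp) with h' | h'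
      · exact hup.ne h'.symm
      · exact Finset.notMem_erase _ _ h'
    · have hu := SimpleGraph.Walk.fst_mem_support_of_mem_edges _ hmem
      erw [SimpleGraph.Walk.support_map] at hu
      rcases support_mem w2 u (by simpa [rstHom, SimpleGraph.Hom.ofLE_apply] using hu) with h' | h'
      · exact hxu h'.symm
      · exact Finset.notMem_erase _ _ h'


open scoped Classical in
/-- The branch of `A` at `u` away from `p`: vertices of `A` reachable from `u`
avoiding `p`. -/
noncomputable def Dset (G : SimpleGraph V) [DecidableEq V] (A : Finset V) (p u : V) :
    Finset V :=
  A.filter (fun v => (rst G (A.erase p)).Reachable u v)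

lemma mem_Dset [DecidableEq V] {A : Finset V} {p u v : V} :
    v ∈ Dset G A p u ↔ v ∈ A ∧ (rst G (A.erase p)).Reachable u v := by
  classical
  simp [Dset]

lemma reach_subset_D [DecidableEq V] (hG : G.IsAcyclic) {A : Finset V} {u p x : V}
    (hup : G.Adj u p) (hx : x ∈ Dset G A p u) (hxu : x ≠ u) {y : V}
    (hy : (rst G (A.erase u)).Reachable x y) : y ∈ Dset G A p u ∧ y ≠ u := by
  obtain ⟨w⟩ := hy
  have hpns : p ∉ w.support := fun hp =>
    not_reach_p hG hup (mem_Dset.mp hx).2 ⟨w.takeUntil p hp⟩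
  have hxA : x ∈ A := (mem_Dset.mp hx).1
  have hr : (rst G (A.erase p)).Reachable x y := by
    refine transfer w (fun v hv => ?_)
    have hvA : v ∈ A := by
      rcases support_mem w v hv with rfl | h'
      · exact hxA
      · exact Finset.mem_of_mem_erase h'
    exact Finset.mem_erase.mpr ⟨fun hvp => hpns (hvp ▸ hv), hvA⟩
  have hyA' : y ∈ A := by
    rcases support_mem w y w.end_mem_support with h' | h'
    · exact h' ▸ hxA
    · exact Finset.mem_of_mem_erase h'
  refine ⟨mem_Dset.mpr ⟨hyA', (mem_Dset.mp hx).2.trans hr⟩, ?_⟩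
  rcases support_mem w y w.end_mem_support with h' | h'
  · exact h' ▸ hxu
  · exact Finset.ne_of_mem_erase h'

lemma exists_nbr [DecidableEq V] {A : Finset V} :
    ∀ (n : ℕ) {u x : V} (w : (rst G A).Walk u x), w.length ≤ n → x ≠ u →
      ∃ c, G.Adj u c ∧ c ∈ A ∧ (rst G (A.erase u)).Reachable c x := by
  intro n
  induction n with
  | zero =>
    intro u x w hl hx
    cases w with
    | nil => exact absurd rfl hx
    | cons _ p => simp [SimpleGraph.Walk.length_cons] at hl
  | succ n ih =>
    intro u x w hl hx
    cases w with
    | nil => exact absurd rfl hx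
    | cons h p =>
      by_cases hu : u ∈ p.support
      · refine ih (p.dropUntil u hu) ?_ hx
        have h1 := SimpleGraph.Walk.length_dropUntil_le p hu
        rw [SimpleGraph.Walk.length_cons] at hl
        omega
      · refine ⟨_, h.1, h.2.2, transfer p (fun v hv => ?_)⟩
        have hvA : v ∈ A := by
          rcases support_mem p v hv with rfl | h'
          · exact h.2.2
          · exact h'
        exact Finset.mem_erase.mpr ⟨fun hvu => hu (hvu ▸ hv), hvA⟩

lemma branch_cover [DecidableEq V] {A : Finset V} (n : ℕ) :
    ∀ {a b v : V}, G.Adj a b → a ∈ A → b ∈ A →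
      ∀ (w : (rst G A).Walk a v), w.length ≤ n →
        v ∈ Dset G A b a ∨ v ∈ Dset G A a b := by
  induction n with
  | zero =>
    intro a b v hab haA hbA w hl
    cases w with
    | nil => exact Or.inl (mem_Dset.mpr ⟨haA, Reachable.refl _⟩)
    | cons _ _ => simp [SimpleGraph.Walk.length_cons] at hl
  | succ n ih =>
    intro a b v hab haA hbA w hl
    by_cases hb : b ∈ w.support
    · have htake : 1 ≤ (w.takeUntil b hb).length := by
        by_contra hc
        push_neg at hc
        have h0 : (w.takeUntil b hb).length = 0 := by omega
        exact hab.ne (SimpleGraph.Walk.eq_of_length_eq_zero h0)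
      have hspec := congrArg SimpleGraph.Walk.length (w.take_spec hb)
      rw [SimpleGraph.Walk.length_append] at hspec
      have hlen : (w.dropUntil b hb).length ≤ n := by omega
      rcases ih hab.symm hbA haA (w.dropUntil b hb) hlen with h | h
      · exact Or.inr h
      · exact Or.inl h
    · left
      refine mem_Dset.mpr ⟨?_, transfer w (fun v' hv' => ?_)⟩
      · rcases support_mem w v w.end_mem_support with rfl | h'
        · exact haA
        · exact h'
      · have hvA : v' ∈ A := by
          rcases support_mem w v' hv' with rfl | h'
          · exact haA
          · exact h'
        exact Finset.mem_erase.mpr ⟨fun hvb => hb (hvb ▸ hv'), hvA⟩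

/-- Homomorphism from induced subgraph into restriction. -/
def induceHomRst (G : SimpleGraph V) (B : Finset V) :
    (G.induce (B : Set V)) →g rst G B :=
  ⟨Subtype.val, fun {x y} h => ⟨h, Finset.mem_coe.mp x.2, Finset.mem_coe.mp y.2⟩⟩

lemma walk_to_induce : ∀ {a b : V} (w : (rst G B).Walk a b) (ha : a ∈ B) (hb : b ∈ B),
    (G.induce (B : Set V)).Reachable ⟨a, ha⟩ ⟨b, hb⟩ := by
  intro a b w
  induction w with
  | nil => intro ha hb; exact Reachable.refl _
  | cons h p ih =>
    intro ha hb
    have hadj : (G.induce (B : Set V)).Adj ⟨_, ha⟩ ⟨_, Finset.mem_coe.mpr h.2.2⟩ := h.1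
    exact hadj.reachable.trans (ih h.2.2 hb)

lemma induce_connected_iff (G : SimpleGraph V) (B : Finset V) :
    (G.induce (B : Set V)).Connected ↔
      B.Nonempty ∧ ∀ a ∈ B, ∀ b ∈ B, (rst G B).Reachable a b := by
  constructor
  · intro h
    obtain ⟨⟨x, hx⟩⟩ := h.nonempty
    refine ⟨⟨x, Finset.mem_coe.mp hx⟩, fun a ha b hb => ?_⟩
    have := h.preconnected ⟨a, Finset.mem_coe.mpr ha⟩ ⟨b, Finset.mem_coe.mpr hb⟩
    exact this.map (induceHomRst G B)
  · rintro ⟨⟨x, hx⟩, hreach⟩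
    haveI : Nonempty (B : Set V) := ⟨⟨x, Finset.mem_coe.mpr hx⟩⟩
    refine ⟨fun a b => ?_⟩
    obtain ⟨a, ha⟩ := a
    obtain ⟨b, hb⟩ := b
    obtain ⟨w⟩ := hreach a (Finset.mem_coe.mp ha) b (Finset.mem_coe.mp hb)
    exact walk_to_induce w _ _


lemma key [Fintype V] [DecidableEq V] {G : SimpleGraph V} (hG : G.IsAcyclic)
    (lam : ℕ) (h1 : 1 ≤ lam) :
    ∀ (n : ℕ) (A : Finset V), A.card = n → lam ∣ n →
      (G.induce (A : Set V)).Connected →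
      ∀ (w : Finset V → ℝ) (c : ℝ), 0 < c → (∀ s, 0 ≤ w s) →
      (∀ s, w s ≠ 0 → s ⊆ A ∧ IsLamSub G lam s) →
      (∀ i ∈ A, ∑ s : Finset V, (if i ∈ s then w s else 0) = c) →
      ∃ P : Finset (Finset V), (∀ s ∈ P, IsLamSub G lam s) ∧
        (P : Set (Finset V)).PairwiseDisjoint id ∧ P.sup id = A := by
  intro n
  induction n using Nat.strong_induction_on with
  | _ n ih =>
  intro A hcard hdvd hconn w c hc hw0 hsupp hcov
  classical
  obtain ⟨hne, hreach⟩ := (induce_connected_iff G A).mp hconn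
  -- `lam ≤ n`
  obtain ⟨i0, hi0⟩ := hne
  have hex : ∃ s : Finset V, (if i0 ∈ s then w s else 0) ≠ 0 := by
    by_contra hall
    push_neg at hall
    have h0 := hcov i0 hi0
    rw [Finset.sum_eq_zero (fun s _ => hall s)] at h0
    exact hc.ne h0
  obtain ⟨s0, hs0⟩ := hex
  have hi0s : i0 ∈ s0 := by by_contra h; simp [h] at hs0
  have hws0 : w s0 ≠ 0 := by intro h; simp [h] at hs0
  have hs0A := (hsupp s0 hws0).1
  obtain ⟨hs0card, -⟩ := (hsupp s0 hws0).2
  have hlamn : lam ≤ n := by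
    rw [← hcard, ← hs0card]
    exact Finset.card_le_card hs0A
  by_cases hn : n = lam
  · subst hn
    refine ⟨{A}, ?_, ?_, ?_⟩
    · intro s hs
      rw [Finset.mem_singleton] at hs
      subst hs
      exact ⟨hcard, hconn⟩
    · simp
    · simp
  -- main case : n ≥ 2 * lam
  have h2lam : 2 * lam ≤ n := by
    obtain ⟨k, hk⟩ := hdvd
    have hk2 : 2 ≤ k := by
      by_contra hlt
      push_neg at hlt
      interval_cases k <;> omega
    calc 2 * lam ≤ lam * k := by nlinarith
      _ = n := hk.symm
  -- an edge inside A
  have hedge : ∃ a b : V, G.Adj a b ∧ a ∈ A ∧ b ∈ A := by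
    have h2 : 1 < A.card := by omega
    obtain ⟨x, hx, y, hy, hxy⟩ := Finset.one_lt_card.mp h2
    obtain ⟨wk⟩ := hreach x hx y hy
    cases wk with
    | nil => exact absurd rfl hxy
    | cons h _ => exact ⟨x, _, h.1, h.2.1, h.2.2⟩
  -- the set of candidate branches
  set T : Finset (V × V) :=
    (A ×ˢ A).filter (fun q => G.Adj q.2 q.1 ∧ lam ≤ (Dset G A q.1 q.2).card) with hT
  have hTne : T.Nonempty := by
    obtain ⟨a, b, hab, haA, hbA⟩ := hedge
    have hcover : ∀ v ∈ A, v ∈ Dset G A b a ∪ Dset G A a b := by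
      intro v hv
      obtain ⟨wk⟩ := hreach a haA v hv
      rcases branch_cover wk.length hab haA hbA wk le_rfl with h | h
      · exact Finset.mem_union_left _ h
      · exact Finset.mem_union_right _ h
    have hcards : n ≤ (Dset G A b a).card + (Dset G A a b).card := by
      calc n = A.card := hcard.symm
        _ ≤ (Dset G A b a ∪ Dset G A a b).card := Finset.card_le_card hcover
        _ ≤ _ := Finset.card_union_le _ _
    by_cases hcase : lam ≤ (Dset G A b a).card
    · exact ⟨(b, a), Finset.mem_filter.mpr ⟨Finset.mem_product.mpr ⟨hbA, haA⟩, hab, hcase⟩⟩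
    · refine ⟨(a, b), Finset.mem_filter.mpr ⟨Finset.mem_product.mpr ⟨haA, hbA⟩, hab.symm, ?_⟩⟩
      show lam ≤ (Dset G A a b).card
      omega
  obtain ⟨⟨p, u⟩, hpuT, hmin⟩ :=
    T.exists_min_image (fun q => (Dset G A q.1 q.2).card) hTne
  obtain ⟨hmemAA, hadj, hDlam⟩ := Finset.mem_filter.mp hpuT
  obtain ⟨hpA, huA⟩ := Finset.mem_product.mp hmemAA
  set D : Finset V := Dset G A p u with hD
  have huD : u ∈ D := mem_Dset.mpr ⟨huA, Reachable.refl _⟩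
  have hDsub : ∀ v ∈ D, v ∈ A.erase p := by
    intro v hv
    obtain ⟨hvA, hvr⟩ := mem_Dset.mp hv
    rcases end_cases hvr with rfl | h'
    · exact Finset.mem_erase.mpr ⟨hadj.ne, hvA⟩
    · exact h'
  -- Claim A
  have claimA : ∀ s, w s ≠ 0 → ∀ x ∈ s, x ∈ D.erase u → u ∈ s := by
    intro s hws x hxs hxD
    have hsA := (hsupp s hws).1
    obtain ⟨hscard, hsconn⟩ := (hsupp s hws).2
    by_contra hus
    obtain ⟨hxu, hxD'⟩ := Finset.mem_erase.mp hxD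
    have hsub_u : s ⊆ A.erase u :=
      fun y hy => Finset.mem_erase.mpr ⟨fun h => hus (h ▸ hy), hsA hy⟩
    have hreach_s := ((induce_connected_iff G s).mp hsconn).2
    by_cases hps : p ∈ s
    · exact not_reach_p hG hadj (mem_Dset.mp hxD').2
        ((hreach_s x hxs p hps).mono (rst_mono hsub_u))
    · have hsD : ∀ y ∈ s, (rst G (A.erase u)).Reachable x y :=
        fun y hy => (hreach_s x hxs y hy).mono (rst_mono hsub_u)
      obtain ⟨wk⟩ := hreach u huA x (hsA hxs)
      obtain ⟨cc, hucc, hccA, hccx⟩ := exists_nbr wk.length wk le_rfl hxu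
      have hsE : s ⊆ Dset G A u cc := fun y hy =>
        mem_Dset.mpr ⟨hsA hy, hccx.trans (hsD y hy)⟩
      have hED : Dset G A u cc ⊆ D.erase u := by
        intro y hy
        have h1 : (rst G (A.erase u)).Reachable x y :=
          hccx.symm.trans (mem_Dset.mp hy).2
        have h2 := reach_subset_D hG hadj hxD' hxu h1
        exact Finset.mem_erase.mpr ⟨h2.2, h2.1⟩
      by_cases hElam : lam ≤ (Dset G A u cc).card
      · have hmem : (u, cc) ∈ T :=
          Finset.mem_filter.mpr ⟨Finset.mem_product.mpr ⟨huA, hccA⟩, hucc.symm, hElam⟩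
        have h3 := hmin _ hmem
        have h4 : (Dset G A u cc).card ≤ (D.erase u).card := Finset.card_le_card hED
        have h5 : (D.erase u).card = D.card - 1 := Finset.card_erase_of_mem huD
        have h6 : 0 < D.card := Finset.card_pos.mpr ⟨u, huD⟩
        simp only at h3
        omega
      · have h7 := Finset.card_le_card hsE
        rw [hscard] at h7
        omega
  have hDlam' : lam ≤ D.card := hDlam
  -- counting
  have hDA : D ⊆ A := fun v hv => Finset.mem_of_mem_erase (hDsub v hv)
  have hsum1 : ∑ i ∈ D.erase u, (∑ s : Finset V, if i ∈ s then w s else 0)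
      = ((D.erase u).card : ℝ) * c := by
    rw [Finset.sum_congr rfl (fun i hi => hcov i (hDA (Finset.mem_of_mem_erase hi)))]
    rw [Finset.sum_const, nsmul_eq_mul]
  have hswap : ∑ i ∈ D.erase u, (∑ s : Finset V, if i ∈ s then w s else 0)
      = ∑ s : Finset V, ((s ∩ D.erase u).card : ℝ) * w s := by
    rw [Finset.sum_comm]
    refine Finset.sum_congr rfl fun s _ => ?_
    rw [Finset.sum_ite_mem, Finset.sum_const, nsmul_eq_mul, Finset.inter_comm]
  have hboundterm : ∀ s : Finset V,
      ((s ∩ D.erase u).card : ℝ) * w s ≤ (lam - 1 : ℝ) * (if u ∈ s then w s else 0) := by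
    intro s
    by_cases hws : w s = 0
    · simp [hws]
    · by_cases hus : u ∈ s
      · rw [if_pos hus]
        obtain ⟨hscard, -⟩ := (hsupp s hws).2
        have hsub : s ∩ D.erase u ⊆ s.erase u := by
          intro y hy
          obtain ⟨hys, hyD⟩ := Finset.mem_inter.mp hy
          exact Finset.mem_erase.mpr ⟨(Finset.mem_erase.mp hyD).1, hys⟩
        have hc1 : (s ∩ D.erase u).card ≤ lam - 1 := by
          have h2 := Finset.card_le_card hsub
          rw [Finset.card_erase_of_mem hus, hscard] at h2
          exact h2
        have hcast : ((s ∩ D.erase u).card : ℝ) ≤ (lam - 1 : ℝ) := by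
          calc ((s ∩ D.erase u).card : ℝ) ≤ ((lam - 1 : ℕ) : ℝ) := Nat.cast_le.mpr hc1
            _ = (lam : ℝ) - 1 := by rw [Nat.cast_sub h1]; simp
        exact mul_le_mul_of_nonneg_right hcast (hw0 s)
      · have hempty : s ∩ D.erase u = ∅ := by
          rw [Finset.eq_empty_iff_forall_notMem]
          intro x hx
          obtain ⟨hxs, hxD⟩ := Finset.mem_inter.mp hx
          exact hus (claimA s hws x hxs hxD)
        simp [hempty, hus]
  have hcovu := hcov u huA
  have hineq : ((D.erase u).card : ℝ) * c ≤ (lam - 1 : ℝ) * c := by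
    calc ((D.erase u).card : ℝ) * c
        = ∑ s : Finset V, ((s ∩ D.erase u).card : ℝ) * w s := by rw [← hswap, hsum1]
      _ ≤ ∑ s : Finset V, (lam - 1 : ℝ) * (if u ∈ s then w s else 0) :=
          Finset.sum_le_sum (fun s _ => hboundterm s)
      _ = (lam - 1 : ℝ) * c := by rw [← Finset.mul_sum, hcovu]
  have hDcard : D.card = lam := by
    have h8 : ((D.erase u).card : ℝ) ≤ (lam - 1 : ℝ) :=
      le_of_mul_le_mul_right hineq hc
    have h9 : (D.erase u).card ≤ lam - 1 := by
      rw [show ((lam : ℝ) - 1) = ((lam - 1 : ℕ) : ℝ) by rw [Nat.cast_sub h1]; simp] at h8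
      exact_mod_cast h8
    rw [Finset.card_erase_of_mem huD] at h9
    omega
  have hsum_eq : ∑ s : Finset V, ((s ∩ D.erase u).card : ℝ) * w s
      = ∑ s : Finset V, (lam - 1 : ℝ) * (if u ∈ s then w s else 0) := by
    rw [← hswap, hsum1, ← Finset.mul_sum, hcovu, Finset.card_erase_of_mem huD, hDcard,
      Nat.cast_sub h1]
    norm_num
  have heq := (Finset.sum_eq_sum_iff_of_le (fun s _ => hboundterm s)).mp hsum_eq
  have hforce : ∀ s, w s ≠ 0 → u ∈ s → s = D := by
    intro s hws hus
    have h := heq s (Finset.mem_univ s)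
    rw [if_pos hus] at h
    obtain ⟨hscard, -⟩ := (hsupp s hws).2
    have hwpos : 0 < w s := lt_of_le_of_ne (hw0 s) (Ne.symm hws)
    have hcardeq : ((s ∩ D.erase u).card : ℝ) = (lam - 1 : ℝ) :=
      mul_right_cancel₀ (ne_of_gt hwpos) h
    have hcardeq' : (s ∩ D.erase u).card = lam - 1 := by
      have h3 : ((s ∩ D.erase u).card : ℝ) = ((lam - 1 : ℕ) : ℝ) := by
        rw [hcardeq, Nat.cast_sub h1]; simp
      exact_mod_cast h3
    have hsub : s ∩ D.erase u ⊆ s.erase u := by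
      intro y hy
      obtain ⟨hys, hyD⟩ := Finset.mem_inter.mp hy
      exact Finset.mem_erase.mpr ⟨(Finset.mem_erase.mp hyD).1, hys⟩
    have hsecard : (s.erase u).card = lam - 1 := by
      rw [Finset.card_erase_of_mem hus, hscard]
    have hseteq : s ∩ D.erase u = s.erase u :=
      Finset.eq_of_subset_of_card_le hsub (by omega)
    have hsD : s ⊆ D := by
      intro y hy
      by_cases hyu : y = u
      · exact hyu ▸ huD
      · have h4 : y ∈ s.erase u := Finset.mem_erase.mpr ⟨hyu, hy⟩
        rw [← hseteq] at h4
        exact Finset.mem_of_mem_erase (Finset.mem_inter.mp h4).2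
    exact Finset.eq_of_subset_of_card_le hsD (le_of_eq (by rw [hDcard, hscard]))
  have hwD : w D = c := by
    have h := Finset.sum_eq_single (s := Finset.univ) D
      (f := fun s => if u ∈ s then w s else 0)
      (fun b _ hb => by
        show (if u ∈ b then w b else 0) = 0
        by_cases hub : u ∈ b
        · rw [if_pos hub]
          by_contra hwb
          exact hb (hforce b hwb hub)
        · exact if_neg hub)
      (fun hD' => absurd (Finset.mem_univ D) hD')
    have h' : (∑ s : Finset V, if u ∈ s then w s else 0) = (if u ∈ D then w D else 0) := h
    rw [if_pos huD] at h'
    rw [← h']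
    exact hcovu
  have hwDne : w D ≠ 0 := by rw [hwD]; exact ne_of_gt hc
  have hDlamsub : IsLamSub G lam D := (hsupp D hwDne).2
  have hdisjD : ∀ s, w s ≠ 0 → s ≠ D → ∀ x ∈ s, x ∉ D := by
    intro s hws hsD x hxs hxD
    by_cases hxu : x = u
    · exact hsD (hforce s hws (hxu ▸ hxs))
    · exact hsD (hforce s hws (claimA s hws x hxs (Finset.mem_erase.mpr ⟨hxu, hxD⟩)))
  -- recurse on A' = A \ D
  set A' : Finset V := A \ D with hA'
  have hA'eq : A' = Dset G A u p := by
    ext v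
    constructor
    · intro hv
      obtain ⟨hvA, hvD⟩ := Finset.mem_sdiff.mp hv
      obtain ⟨wk⟩ := hreach u huA v hvA
      rcases branch_cover wk.length hadj huA hpA wk le_rfl with h | h
      · exact absurd h hvD
      · exact h
    · intro hv
      refine Finset.mem_sdiff.mpr ⟨(mem_Dset.mp hv).1, fun hvD => ?_⟩
      exact not_reach_p hG hadj (mem_Dset.mp hvD).2 (mem_Dset.mp hv).2.symm
  have hcardA' : A'.card = n - lam := by
    rw [hA', Finset.card_sdiff_of_subset hDA, hcard, hDcard]
  have hpA' : p ∈ A' :=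
    Finset.mem_sdiff.mpr ⟨hpA, fun h => (Finset.mem_erase.mp (hDsub p h)).1 rfl⟩
  have hconn' : (G.induce (A' : Set V)).Connected := by
    rw [induce_connected_iff]
    refine ⟨⟨p, hpA'⟩, ?_⟩
    have hsuff : ∀ v ∈ A', (rst G A').Reachable p v := by
      intro v hv
      have hvP : v ∈ Dset G A u p := by rw [← hA'eq]; exact hv
      obtain ⟨wk⟩ := (mem_Dset.mp hvP).2
      refine transfer wk (fun y hy => ?_)
      have hyA : y ∈ A := by
        rcases support_mem wk y hy with rfl | h'
        · exact hpA
        · exact Finset.mem_of_mem_erase h'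
      have hyP : y ∈ Dset G A u p := mem_Dset.mpr ⟨hyA, ⟨wk.takeUntil y hy⟩⟩
      rw [← hA'eq] at hyP
      exact hyP
    intro a ha b hb
    exact (hsuff a ha).symm.trans (hsuff b hb)
  have hdvd' : lam ∣ (n - lam) := Nat.dvd_sub hdvd dvd_rfl
  have hlt : n - lam < n := by omega
  have hw0' : ∀ s : Finset V, 0 ≤ (if s = D then 0 else w s) := by
    intro s
    by_cases h : s = D
    · simp [h]
    · simpa [h] using hw0 s
  have hsupp' : ∀ s, (if s = D then 0 else w s) ≠ 0 → s ⊆ A' ∧ IsLamSub G lam s := by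
    intro s hs
    by_cases h : s = D
    · simp [h] at hs
    · rw [if_neg h] at hs
      refine ⟨?_, (hsupp s hs).2⟩
      intro y hy
      exact Finset.mem_sdiff.mpr ⟨(hsupp s hs).1 hy, hdisjD s hs h y hy⟩
  have hcov' : ∀ i ∈ A',
      ∑ s : Finset V, (if i ∈ s then (if s = D then 0 else w s) else 0) = c := by
    intro i hi
    have hiD : i ∉ D := (Finset.mem_sdiff.mp hi).2
    rw [← hcov i (Finset.mem_sdiff.mp hi).1]
    refine Finset.sum_congr rfl fun s _ => ?_
    by_cases hsD : s = D
    · subst hsD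
      simp [hiD]
    · simp [hsD]
  obtain ⟨P', hP'sub, hP'dis, hP'sup⟩ :=
    ih (n - lam) hlt A' hcardA' hdvd' hconn' _ c hc hw0' hsupp' hcov'
  refine ⟨insert D P', ?_, ?_, ?_⟩
  · intro s hs
    rcases Finset.mem_insert.mp hs with rfl | hs'
    · exact hDlamsub
    · exact hP'sub s hs'
  · rw [Finset.coe_insert]
    refine Set.PairwiseDisjoint.insert hP'dis ?_
    intro s hs _
    have hsA' : s ⊆ A' := by
      have h5 := Finset.le_sup (f := id) (Finset.mem_coe.mp hs)
      rw [hP'sup] at h5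
      exact h5
    have hsA'' : s ⊆ A \ D := by rw [← hA']; exact hsA'
    exact Finset.disjoint_sdiff.mono_right hsA''
  · rw [Finset.sup_insert, hP'sup, hA']
    show id D ⊔ (A \ D) = A
    rw [id_eq, Finset.sup_eq_union, Finset.union_sdiff_of_subset hDA]


section Strat
variable [Fintype V] [DecidableEq V] {G : SimpleGraph V} {lam : ℕ} {q : Finset V → ℝ}

lemma vertexProb_nonneg (hq : IsDefStrat G lam q) (i : V) : 0 ≤ vertexProb q i :=
  Finset.sum_nonneg fun s _ => by
    by_cases h : i ∈ s
    · simpa [h] using hq.1 s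
    · simp [h]

lemma sum_vertexProb (hq : IsDefStrat G lam q) :
    ∑ i : V, vertexProb q i = lam := by
  unfold vertexProb
  rw [Finset.sum_comm]
  have h : ∀ s : Finset V, ∑ i : V, (if i ∈ s then q s else 0) = (lam : ℝ) * q s := by
    intro s
    rw [Finset.sum_ite_mem, Finset.univ_inter, Finset.sum_const, nsmul_eq_mul]
    by_cases h : q s = 0
    · simp [h]
    · rw [(hq.2.1 s h).1]
  rw [Finset.sum_congr rfl fun s _ => h s, ← Finset.mul_sum, hq.2.2, mul_one]

variable [Nonempty V]

lemma ciInf_vertexProb_le (hq : IsDefStrat G lam q) :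
    (⨅ i, vertexProb q i) ≤ (lam : ℝ) / Fintype.card V := by
  have hn : 0 < (Fintype.card V : ℝ) := by
    exact_mod_cast Fintype.card_pos
  rw [← Finset.inf'_univ_eq_ciInf]
  rw [le_div_iff₀ hn]
  have h2 : (Finset.univ.card) • (Finset.univ.inf' Finset.univ_nonempty (vertexProb q))
      ≤ ∑ i : V, vertexProb q i :=
    Finset.card_nsmul_le_sum _ _ _ (fun i _ => Finset.inf'_le _ (Finset.mem_univ i))
  rw [sum_vertexProb hq, Finset.card_univ, nsmul_eq_mul] at h2
  calc Finset.univ.inf' Finset.univ_nonempty (vertexProb q) * (Fintype.card V)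
      = (Fintype.card V : ℝ) * Finset.univ.inf' Finset.univ_nonempty (vertexProb q) := by ring
    _ ≤ lam := h2

lemma pstar_le (G : SimpleGraph V) (lam : ℕ) :
    pstar G lam ≤ (lam : ℝ) / Fintype.card V := by
  apply Real.sSup_le
  · rintro x ⟨q, hq, rfl⟩
    exact ciInf_vertexProb_le hq
  · positivity

end Strat

end DefenseAux

open DefenseAux in
theorem stmt6 [Fintype V] [DecidableEq V] [Nonempty V] (G : SimpleGraph V)
    (hT : G.IsTree) (lam : ℕ) (h1 : 1 ≤ lam) (hdvd : lam ∣ Fintype.card V) :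
    pstar G lam = (lam : ℝ) / Fintype.card V ↔
      ∃ P : Finset (Finset V), (∀ s ∈ P, IsLamSub G lam s) ∧
        (P : Set (Finset V)).PairwiseDisjoint id ∧ P.sup id = Finset.univ := by
  classical
  have hncard : 0 < Fintype.card V := Fintype.card_pos
  have hnR : (0:ℝ) < (Fintype.card V : ℝ) := by exact_mod_cast hncard
  have hlamR : (0:ℝ) < (lam : ℝ) := by exact_mod_cast h1
  have hposc : (0:ℝ) < (lam : ℝ) / Fintype.card V := by positivity
  constructor
  · -- hard direction
    intro hps
    set K : Set (Finset V → ℝ) := {q | IsDefStrat G lam q} with hK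
    have hKne : K.Nonempty := by
      by_contra hKe
      rw [Set.not_nonempty_iff_eq_empty] at hKe
      have hXe : {x : ℝ | ∃ q, IsDefStrat G lam q ∧ x = ⨅ i, vertexProb q i} = ∅ := by
        rw [Set.eq_empty_iff_forall_notMem]
        rintro x ⟨q, hq, -⟩
        exact absurd (show q ∈ K from hq) (by rw [hKe]; exact Set.notMem_empty q)
      rw [pstar, hXe, Real.sSup_empty] at hps
      linarith
    have hclosed : IsClosed K := by
      have hKeq : K = {q : Finset V → ℝ | ∀ s, 0 ≤ q s} ∩
          ({q : Finset V → ℝ | ∀ s, ¬ IsLamSub G lam s → q s = 0} ∩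
           {q : Finset V → ℝ | ∑ s : Finset V, q s = 1}) := by
        ext q
        simp only [hK, Set.mem_setOf_eq, Set.mem_inter_iff, IsDefStrat]
        constructor
        · rintro ⟨ha, hb, hc⟩
          exact ⟨ha, fun s hs => by_contra fun h => hs (hb s h), hc⟩
        · rintro ⟨ha, hb, hc⟩
          exact ⟨ha, fun s hs => by_contra fun h => hs (hb s h), hc⟩
      rw [hKeq]
      refine IsClosed.inter ?_ (IsClosed.inter ?_ ?_)
      · have : {q : Finset V → ℝ | ∀ s, 0 ≤ q s} = ⋂ s, {q : Finset V → ℝ | 0 ≤ q s} := by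
          ext q; simp
        rw [this]
        exact isClosed_iInter fun s => isClosed_le continuous_const (continuous_apply s)
      · have : {q : Finset V → ℝ | ∀ s, ¬ IsLamSub G lam s → q s = 0} =
            ⋂ s, {q : Finset V → ℝ | ¬ IsLamSub G lam s → q s = 0} := by
          ext q; simp
        rw [this]
        refine isClosed_iInter fun s => ?_
        by_cases h : IsLamSub G lam s
        · have : {q : Finset V → ℝ | ¬ IsLamSub G lam s → q s = 0} = Set.univ := by
            ext q; simp [h]
          rw [this]; exact isClosed_univ
        · have : {q : Finset V → ℝ | ¬ IsLamSub G lam s → q s = 0} =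
              {q : Finset V → ℝ | q s = 0} := by
            ext q; simp [h]
          rw [this]
          exact isClosed_eq (continuous_apply s) continuous_const
      · exact isClosed_eq (continuous_finset_sum _ fun s _ => continuous_apply s)
          continuous_const
    have hsubbox : K ⊆ Set.univ.pi (fun _ : Finset V => Set.Icc (0:ℝ) 1) := by
      intro q hq s _
      refine ⟨hq.1 s, ?_⟩
      rw [← hq.2.2]
      exact Finset.single_le_sum (fun t _ => hq.1 t) (Finset.mem_univ s)
    have hKc : IsCompact K :=
      (isCompact_univ_pi fun _ => isCompact_Icc).of_isClosed_subset hclosed hsubbox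
    have hcont : Continuous (fun q : Finset V → ℝ =>
        Finset.univ.inf' Finset.univ_nonempty (fun i => vertexProb q i)) := by
      refine Continuous.finset_inf'_apply _ (fun i _ => ?_)
      unfold vertexProb
      refine continuous_finset_sum _ fun s _ => ?_
      by_cases h : i ∈ s
      · simpa [h] using continuous_apply s
      · simpa [h] using continuous_const
    obtain ⟨q0, hq0K, hq0max⟩ := hKc.exists_isMaxOn hKne hcont.continuousOn
    have hq0 : IsDefStrat G lam q0 := hq0K
    have hfval : ∀ q : Finset V → ℝ, (⨅ i, vertexProb q i) =
        Finset.univ.inf' Finset.univ_nonempty (fun i => vertexProb q i) :=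
      fun q => (Finset.inf'_univ_eq_ciInf _).symm
    have hf0 : 0 ≤ Finset.univ.inf' Finset.univ_nonempty (fun i => vertexProb q0 i) :=
      Finset.le_inf' _ _ fun i _ => vertexProb_nonneg hq0 i
    have hfq0 : Finset.univ.inf' Finset.univ_nonempty (fun i => vertexProb q0 i)
        = (lam : ℝ) / Fintype.card V := by
      apply le_antisymm
      · rw [← hfval]
        exact ciInf_vertexProb_le hq0
      · rw [← hps, pstar]
        apply Real.sSup_le
        · rintro x ⟨q, hq, rfl⟩
          rw [hfval]
          exact hq0max hq
        · exact hf0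
    have hvp : ∀ i : V, vertexProb q0 i = (lam : ℝ) / Fintype.card V := by
      have hle : ∀ i ∈ Finset.univ, ((lam : ℝ) / Fintype.card V) ≤ vertexProb q0 i := by
        intro i _
        rw [← hfq0]
        exact Finset.inf'_le _ (Finset.mem_univ i)
      have hsum : ∑ i : V, ((lam : ℝ) / Fintype.card V) = ∑ i : V, vertexProb q0 i := by
        rw [sum_vertexProb hq0, Finset.sum_const, Finset.card_univ, nsmul_eq_mul]
        field_simp
      intro i
      exact ((Finset.sum_eq_sum_iff_of_le hle).mp hsum i (Finset.mem_univ i)).symm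
    have hconnU : (G.induce ((Finset.univ : Finset V) : Set V)).Connected := by
      rw [induce_connected_iff]
      refine ⟨Finset.univ_nonempty, fun a _ b _ => ?_⟩
      exact SimpleGraph.Reachable.mono (fun x y h => ⟨h, Finset.mem_univ x, Finset.mem_univ y⟩)
        (hT.isConnected.preconnected a b)
    obtain ⟨P, hh1, hh2, hh3⟩ := key hT.IsAcyclic lam h1 (Fintype.card V) Finset.univ
      (by simp) hdvd hconnU q0 ((lam : ℝ) / Fintype.card V) hposc hq0.1
      (fun s hs => ⟨Finset.subset_univ s, hq0.2.1 s hs⟩)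
      (fun i _ => hvp i)
    exact ⟨P, hh1, hh2, hh3⟩
  · -- easy direction
    rintro ⟨P, hPsub, hPdis, hPsup⟩
    have hcardV : P.card * lam = Fintype.card V := by
      have hb : (Finset.univ : Finset V) = P.biUnion id := by
        rw [← Finset.sup_eq_biUnion, hPsup]
      have h2 : Fintype.card V = ∑ s ∈ P, (id s).card := by
        rw [← Finset.card_univ, hb]
        exact Finset.card_biUnion fun x hx y hy hxy =>
          hPdis (Finset.mem_coe.mpr hx) (Finset.mem_coe.mpr hy) hxy
      have h3 : ∑ s ∈ P, (id s).card = ∑ _s ∈ P, lam :=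
        Finset.sum_congr rfl fun s hs => (hPsub s hs).1
      rw [h2, h3, Finset.sum_const, smul_eq_mul]
    have hPcR : (P.card : ℝ) * (lam : ℝ) = (Fintype.card V : ℝ) := by
      exact_mod_cast hcardV
    set q : Finset V → ℝ := fun s => if s ∈ P then (lam : ℝ) / Fintype.card V else 0
      with hqdef
    have hstrat : IsDefStrat G lam q := by
      refine ⟨fun s => ?_, fun s hs => ?_, ?_⟩
      · rw [hqdef]
        by_cases h : s ∈ P
        · simp only [h, if_true]
          positivity
        · simp [h]
      · rw [hqdef] at hs
        by_cases h : s ∈ P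
        · exact hPsub s h
        · simp [h] at hs
      · rw [hqdef]
        rw [Finset.sum_ite_mem, Finset.univ_inter, Finset.sum_const, nsmul_eq_mul]
        field_simp
        linarith [hPcR]
    have hvp : ∀ i : V, vertexProb q i = (lam : ℝ) / Fintype.card V := by
      intro i
      have hiu : i ∈ P.biUnion id := by
        rw [← Finset.sup_eq_biUnion, hPsup]
        exact Finset.mem_univ i
      obtain ⟨s0, hs0P, hs0i0⟩ := Finset.mem_biUnion.mp hiu
      have hs0i : i ∈ s0 := hs0i0
      unfold vertexProb
      rw [Finset.sum_eq_single s0]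
      · rw [hqdef]
        simp [hs0i, hs0P]
      · intro b _ hb
        by_cases hib : i ∈ b
        · rw [if_pos hib, hqdef]
          by_cases hbP : b ∈ P
          · exfalso
            have hd := hPdis (Finset.mem_coe.mpr hbP) (Finset.mem_coe.mpr hs0P) hb
            exact absurd hs0i (Finset.disjoint_left.mp hd hib)
          · simp [hbP]
        · exact if_neg hib
      · intro h
        exact absurd (Finset.mem_univ s0) h
    have hXmem : ((lam : ℝ) / Fintype.card V) ∈
        {x : ℝ | ∃ q, IsDefStrat G lam q ∧ x = ⨅ i, vertexProb q i} := by
      refine ⟨q, hstrat, ?_⟩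
      have : (fun i : V => vertexProb q i) = fun _ => (lam : ℝ) / Fintype.card V := by
        funext i; exact hvp i
      rw [this, ciInf_const]
    have hbdd : BddAbove {x : ℝ | ∃ q, IsDefStrat G lam q ∧ x = ⨅ i, vertexProb q i} := by
      refine ⟨(lam : ℝ) / Fintype.card V, ?_⟩
      rintro x ⟨q', hq', rfl⟩
      exact ciInf_vertexProb_le hq'
    exact le_antisymm (pstar_le G lam) (le_csSup hbdd hXmem)
end

section
/- Let T be a tree, λ ≥ 2, and suppose a collection L of λ-subgraphs covers T with every vertex covered with equal probability under the uniform (or any) distribution witnessing p*(T) = λ/n. Then for any leaf u of T with parent v, every λ-subgraph in L covering v also covers u, and every λ-subgraph covering u also covers v. -/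
open Finset

variable {V : Type*}

lemma leaf_mem_of_lamSub {G : SimpleGraph V} {lam : ℕ} (hlam : 2 ≤ lam)
    {s : Finset V} (hs : IsLamSub G lam s) {u v : V}
    (hleaf : G.neighborSet u = {v}) (hu : u ∈ s) : v ∈ s := by
  classical
  obtain ⟨hcard, hconn⟩ := hs
  have hlt : 1 < s.card := by omega
  obtain ⟨w, hw, hwu⟩ := Finset.exists_mem_ne hlt u
  have hr : (G.induce (s : Set V)).Reachable ⟨u, by simpa using hu⟩ ⟨w, by simpa using hw⟩ :=
    hconn ⟨u, by simpa using hu⟩ ⟨w, by simpa using hw⟩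
  obtain ⟨p⟩ := hr
  cases p with
  | nil => exact absurd rfl hwu
  | cons h p =>
    rename_i b
    have hadj : G.Adj u b.val := h
    have : (b : V) ∈ G.neighborSet u := hadj
    rw [hleaf] at this
    have hb : (b : V) ∈ (s : Set V) := b.property
    rw [this] at hb
    simpa using hb

theorem stmt7 [Fintype V] [DecidableEq V] (G : SimpleGraph V) (hT : G.IsTree)
    (lam : ℕ) (hlam : 2 ≤ lam)
    (L : Finset (Finset V)) (hL : ∀ s ∈ L, IsLamSub G lam s)
    (q : Finset V → ℝ) (hq : IsDefStrat G lam q)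
    (hsupp : ∀ s, q s ≠ 0 ↔ s ∈ L)
    (hcov : ∀ i, vertexProb q i = (lam : ℝ) / Fintype.card V)
    (u v : V) (hleaf : G.neighborSet u = {v}) :
    ∀ H ∈ L, (u ∈ H → v ∈ H) ∧ (v ∈ H → u ∈ H) := by
  obtain ⟨hq0, hqsub, hqsum⟩ := hq
  have huv : ∀ s : Finset V, q s ≠ 0 → u ∈ s → v ∈ s := fun s hqs hu =>
    leaf_mem_of_lamSub hlam (hqsub s hqs) hleaf hu
  -- difference of coverage probabilities is zero, termwise nonneg
  have hterm : ∀ s : Finset V,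
      0 ≤ (if v ∈ s then q s else 0) - (if u ∈ s then q s else 0) := by
    intro s
    by_cases hqs : q s = 0
    · simp [hqs]
    · by_cases hu : u ∈ s
      · simp [hu, huv s hqs hu]
      · simp only [hu, if_false, sub_zero]
        split
        · exact hq0 s
        · exact le_rfl
  have hsum0 : ∑ s : Finset V,
      ((if v ∈ s then q s else 0) - (if u ∈ s then q s else 0)) = 0 := by
    rw [Finset.sum_sub_distrib]
    have h1 := hcov v
    have h2 := hcov u
    unfold vertexProb at h1 h2
    rw [h1, h2, sub_self]
  have hall : ∀ s : Finset V,
      (if v ∈ s then q s else 0) - (if u ∈ s then q s else 0) = 0 := by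
    intro s
    have := (Finset.sum_eq_zero_iff_of_nonneg (fun s _ => hterm s)).mp hsum0
    exact this s (Finset.mem_univ s)
  intro H hH
  have hqH : q H ≠ 0 := (hsupp H).mpr hH
  refine ⟨fun hu => huv H hqH hu, fun hv => ?_⟩
  by_contra hu
  have := hall H
  simp [hv, hu] at this
  exact hqH this
end

section
/- Let n ≥ 3 and let λ be even with 2 ≤ λ ≤ n−1; set σ = λ/2 and b = ⌊(n−1)/σ⌋. Let G be the spider graph consisting of a central vertex joined to one endpoint of each of b disjoint paths of σ vertices, plus (if n−1−bσ > 0) one additional path of n−1−bσ < σ vertices joined to the center. Then p*(G) = 1/b. -/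
open Finset

variable {V : Type*}

/-- Vertex type of the spider graph: a center, `b` complete legs of `sigma` vertices each, and one incomplete leg of `rem` vertices. -/
abbrev SpiderV (b σ rem : ℕ) := Unit ⊕ (Fin b × Fin σ) ⊕ Fin rem

/-- Adjacency-generating relation of the spider graph: the center is joined to the
first vertex of each leg and consecutive vertices along each leg are joined. -/
def spiderRel (b σ rem : ℕ) : SpiderV b σ rem → SpiderV b σ rem → Prop
  | Sum.inl _, Sum.inr (Sum.inl (_, i)) => (i : ℕ) = 0
  | Sum.inl _, Sum.inr (Sum.inr i) => (i : ℕ) = 0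
  | Sum.inr (Sum.inl (j, i)), Sum.inr (Sum.inl (j', i')) => j = j' ∧ (i' : ℕ) = (i : ℕ) + 1
  | Sum.inr (Sum.inr i), Sum.inr (Sum.inr i') => (i' : ℕ) = (i : ℕ) + 1
  | _, _ => False

/-- The spider graph. -/
def spiderGraph (b σ rem : ℕ) : SimpleGraph (SpiderV b σ rem) :=
  SimpleGraph.fromRel (spiderRel b σ rem)

namespace Spider

variable {b σ rem : ℕ}

def ctr : SpiderV b σ rem := Sum.inl ()
def legV (j : Fin b) (i : Fin σ) : SpiderV b σ rem := Sum.inr (Sum.inl (j, i))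
def incV (r : Fin rem) : SpiderV b σ rem := Sum.inr (Sum.inr r)

lemma legV_injective (j : Fin b) : Function.Injective (legV (b := b) (σ := σ) (rem := rem) j) := by
  intro a c h
  simp only [legV, Sum.inr.injEq, Sum.inl.injEq, Prod.mk.injEq, true_and] at h
  exact h

lemma incV_injective : Function.Injective (incV (b := b) (σ := σ) (rem := rem)) := by
  intro a c h
  simp only [incV, Sum.inr.injEq] at h
  exact h

/-- potential for leg `j` -/
def pot (j : Fin b) : SpiderV b σ rem → ℕ
  | Sum.inl _ => 1
  | Sum.inr (Sum.inl p) => if p.1 = j then p.2.val + 2 else 0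
  | Sum.inr (Sum.inr _) => 0

lemma pot_step {u v : SpiderV b σ rem} (h : (spiderGraph b σ rem).Adj u v) (j : Fin b) :
    pot j u ≤ pot j v + 1 := by
  have key : ∀ x y : SpiderV b σ rem, spiderRel b σ rem x y →
      pot j y ≤ pot j x + 1 ∧ pot j x ≤ pot j y + 1 := by
    rintro (x | ⟨⟨jx, ix⟩ | rx⟩) (y | ⟨⟨jy, iy⟩ | ry⟩) hr <;>
      simp [spiderRel] at hr <;> simp [pot] <;> split_ifs <;> omega
  obtain ⟨-, hr | hr⟩ := h
  · exact (key _ _ hr).2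
  · exact (key _ _ hr).1

lemma walk_ivt {W : Type*} {G : SimpleGraph W} (f : W → ℕ)
    (hstep : ∀ ⦃x y⦄, G.Adj x y → f x ≤ f y + 1) {u v : W} (w : G.Walk u v)
    (k : ℕ) (hk1 : f v ≤ k) (hk2 : k ≤ f u) : ∃ x ∈ w.support, f x = k := by
  induction w with
  | nil => exact ⟨_, SimpleGraph.Walk.start_mem_support _, by omega⟩
  | @cons a c d h p ih =>
    by_cases hc : f a = k
    · exact ⟨_, SimpleGraph.Walk.start_mem_support _, hc⟩
    · have h1 : k ≤ f c := by have := hstep h; omega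
      obtain ⟨x, hx, hfx⟩ := ih hk1 h1
      exact ⟨x, by simp [hx], hfx⟩

end Spider

namespace Spider

variable {b σ rem : ℕ}

lemma pot_eq_one {j : Fin b} {v : SpiderV b σ rem} (h : pot j v = 1) : v = ctr := by
  rcases v with _ | ⟨⟨jv, iv⟩ | rv⟩
  · rfl
  · simp [pot] at h; split_ifs at h <;> omega
  · simp [pot] at h

lemma pot_eq_add_two {j : Fin b} {v : SpiderV b σ rem} {m : ℕ} (hm : m < σ)
    (h : pot j v = m + 2) : v = legV j ⟨m, hm⟩ := by
  rcases v with _ | ⟨⟨jv, iv⟩ | rv⟩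
  · simp [pot] at h
  · simp only [pot] at h
    split_ifs at h with hj
    · subst hj
      have : iv = ⟨m, hm⟩ := Fin.ext (show iv.val = m by omega)
      rw [this]; rfl
  · simp [pot] at h

def leafV (hσ : 0 < σ) (j : Fin b) : SpiderV b σ rem := legV j ⟨σ - 1, by omega⟩

lemma induce_adj {s : Set (SpiderV b σ rem)} {a c : ↥s}
    (h : ((spiderGraph b σ rem).induce s).Adj a c) :
    (spiderGraph b σ rem).Adj a.val c.val := h

lemma no_two_leaves (hσ : 0 < σ) {s : Finset (SpiderV b σ rem)}
    (hcard : s.card = 2 * σ)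
    (hconn : ((spiderGraph b σ rem).induce (s : Set (SpiderV b σ rem))).Connected)
    {j j' : Fin b} (hne : j ≠ j') (hj : leafV hσ j ∈ s) (hj' : leafV hσ j' ∈ s) : False := by
  obtain ⟨w⟩ := hconn.preconnected ⟨leafV hσ j, hj⟩ ⟨leafV hσ j', hj'⟩
  -- leg j ⊆ s and center ∈ s via pot j on w
  have hstep : ∀ ⦃x y : ↥(s : Set (SpiderV b σ rem))⦄,
      ((spiderGraph b σ rem).induce (s : Set (SpiderV b σ rem))).Adj x y →
      pot j x.val ≤ pot j y.val + 1 := fun x y h => pot_step (induce_adj h) j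
  have hstartj : pot j (leafV hσ j : SpiderV b σ rem) = (σ - 1) + 2 := by
    simp [leafV, legV, pot]
  have hendj : pot j (leafV hσ j' : SpiderV b σ rem) = 0 := by
    simp [leafV, legV, pot, hne.symm]
  have hlegj : ∀ i : Fin σ, legV j i ∈ s := by
    intro i
    obtain ⟨x, -, hx⟩ := walk_ivt (fun x : ↥(s : Set (SpiderV b σ rem)) => pot j x.val)
      hstep w (i.val + 2)
      (show pot j (leafV hσ j') ≤ _ by rw [hendj]; omega)
      (show _ ≤ pot j (leafV hσ j) by rw [hstartj]; have := i.2; omega)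
    have := pot_eq_add_two i.2 hx
    have h2 : (⟨i.val, i.2⟩ : Fin σ) = i := by ext; rfl
    rw [h2] at this
    rw [← this]; exact x.2
  have hctr : (ctr : SpiderV b σ rem) ∈ s := by
    obtain ⟨x, -, hx⟩ := walk_ivt (fun x : ↥(s : Set (SpiderV b σ rem)) => pot j x.val)
      hstep w 1
      (show pot j (leafV hσ j') ≤ _ by rw [hendj]; omega)
      (show _ ≤ pot j (leafV hσ j) by rw [hstartj]; omega)
    have := pot_eq_one hx
    rw [← this]; exact x.2
  have hstep' : ∀ ⦃x y : ↥(s : Set (SpiderV b σ rem))⦄,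
      ((spiderGraph b σ rem).induce (s : Set (SpiderV b σ rem))).Adj x y →
      pot j' x.val ≤ pot j' y.val + 1 := fun x y h => pot_step (induce_adj h) j'
  have hstartj' : pot j' (leafV hσ j' : SpiderV b σ rem) = (σ - 1) + 2 := by
    simp [leafV, legV, pot]
  have hendj' : pot j' (leafV hσ j : SpiderV b σ rem) = 0 := by
    simp [leafV, legV, pot, hne]
  have hlegj' : ∀ i : Fin σ, legV j' i ∈ s := by
    intro i
    obtain ⟨x, -, hx⟩ := walk_ivt (fun x : ↥(s : Set (SpiderV b σ rem)) => pot j' x.val)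
      hstep' w.reverse (i.val + 2)
      (show pot j' (leafV hσ j) ≤ _ by rw [hendj']; omega)
      (show _ ≤ pot j' (leafV hσ j') by rw [hstartj']; have := i.2; omega)
    have := pot_eq_add_two i.2 hx
    have h2 : (⟨i.val, i.2⟩ : Fin σ) = i := by ext; rfl
    rw [h2] at this
    rw [← this]; exact x.2
  -- build a subset of s with 2σ+1 elements
  set U : Finset (SpiderV b σ rem) :=
    insert ctr ((univ.image (legV j)) ∪ (univ.image (legV j'))) with hU
  have hUsub : U ⊆ s := by
    intro v hv
    simp only [hU, mem_insert, mem_union, mem_image, mem_univ, true_and] at hv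
    rcases hv with rfl | ⟨i, rfl⟩ | ⟨i, rfl⟩
    · exact hctr
    · exact hlegj i
    · exact hlegj' i
  have hUcard : U.card = 2 * σ + 1 := by
    rw [hU, card_insert_of_notMem, card_union_of_disjoint]
    · rw [card_image_of_injective _ (legV_injective j),
        card_image_of_injective _ (legV_injective j'), card_univ, Fintype.card_fin]
      omega
    · rw [disjoint_left]
      rintro v hv hv'
      simp only [mem_image, mem_univ, true_and] at hv hv'
      obtain ⟨i, rfl⟩ := hv
      obtain ⟨i', hi'⟩ := hv'
      simp only [legV, Sum.inr.injEq, Sum.inl.injEq, Prod.mk.injEq] at hi'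
      exact hne hi'.1.symm
    · simp only [mem_union, mem_image, mem_univ, true_and, not_or]
      constructor <;> · rintro ⟨i, hi⟩; simp [ctr, legV] at hi
  have := card_le_card hUsub
  omega

end Spider

namespace Spider

variable {b σ rem : ℕ}

def otherLeg (hb2 : 2 ≤ b) (j : Fin b) : Fin b :=
  if j.val = 0 then ⟨1, by omega⟩ else ⟨0, by omega⟩

lemma otherLeg_ne (hb2 : 2 ≤ b) (j : Fin b) : otherLeg hb2 j ≠ j := by
  unfold otherLeg
  split_ifs with h
  · intro hc; rw [← hc] at h; simp at h
  · intro hc; rw [← hc] at h; simp at h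

def Tset (hb2 : 2 ≤ b) (j : Fin b) : Finset (SpiderV b σ rem) :=
  insert ctr ((univ.image (legV j)) ∪ (univ.image incV) ∪
    ((univ.filter (fun i : Fin σ => i.val + rem + 1 < σ)).image (legV (otherLeg hb2 j))))

lemma ctr_mem_Tset (hb2 : 2 ≤ b) (j : Fin b) : (ctr : SpiderV b σ rem) ∈ Tset hb2 j :=
  mem_insert_self _ _

lemma leg_mem_Tset (hb2 : 2 ≤ b) (j : Fin b) (i : Fin σ) :
    (legV j i : SpiderV b σ rem) ∈ Tset hb2 j := by
  simp [Tset]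

lemma inc_mem_Tset (hb2 : 2 ≤ b) (j : Fin b) (r : Fin rem) :
    (incV r : SpiderV b σ rem) ∈ Tset hb2 j := by
  simp [Tset]

lemma mem_Tset_iff (hb2 : 2 ≤ b) (j : Fin b) (v : SpiderV b σ rem) :
    v ∈ Tset hb2 j ↔ v = ctr ∨ (∃ i, v = legV j i) ∨ (∃ r, v = incV r) ∨
      (∃ i : Fin σ, i.val + rem + 1 < σ ∧ v = legV (otherLeg hb2 j) i) := by
  simp only [Tset, mem_insert, mem_union, mem_image, mem_univ, true_and, mem_filter]
  constructor
  · rintro (rfl | (⟨i, rfl⟩ | ⟨r, rfl⟩) | ⟨i, hi, rfl⟩)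
    · exact Or.inl rfl
    · exact Or.inr (Or.inl ⟨i, rfl⟩)
    · exact Or.inr (Or.inr (Or.inl ⟨r, rfl⟩))
    · exact Or.inr (Or.inr (Or.inr ⟨i, hi, rfl⟩))
  · rintro (rfl | ⟨i, rfl⟩ | ⟨r, rfl⟩ | ⟨i, hi, rfl⟩)
    · exact Or.inl rfl
    · exact Or.inr (Or.inl (Or.inl ⟨i, rfl⟩))
    · exact Or.inr (Or.inl (Or.inr ⟨r, rfl⟩))
    · exact Or.inr (Or.inr ⟨i, hi, rfl⟩)


lemma card_Tset (hb2 : 2 ≤ b) (hσrem : rem + 1 ≤ σ) (j : Fin b) :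
    (Tset hb2 j : Finset (SpiderV b σ rem)).card = 2 * σ := by
  have hfilter : (univ.filter (fun i : Fin σ => i.val + rem + 1 < σ)).card = σ - rem - 1 := by
    have : (univ.filter (fun i : Fin σ => i.val + rem + 1 < σ)) =
        Finset.Iio (⟨σ - rem - 1, by omega⟩ : Fin σ) := by
      ext i
      simp [Fin.lt_def]
      omega
    rw [this, Fin.card_Iio]
  have hd1 : Disjoint (univ.image (legV j) : Finset (SpiderV b σ rem)) (univ.image incV) := by
    rw [disjoint_left]
    rintro v hv hv'
    simp only [mem_image, mem_univ, true_and] at hv hv'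
    obtain ⟨i, rfl⟩ := hv
    obtain ⟨r, hr⟩ := hv'
    simp [legV, incV] at hr
  have hd2 : Disjoint ((univ.image (legV j) : Finset (SpiderV b σ rem)) ∪ univ.image incV)
      ((univ.filter (fun i : Fin σ => i.val + rem + 1 < σ)).image (legV (otherLeg hb2 j))) := by
    rw [disjoint_left]
    rintro v hv hv'
    simp only [mem_union, mem_image, mem_univ, true_and, mem_filter] at hv hv'
    obtain ⟨i, -, rfl⟩ := hv'
    rcases hv with ⟨i', hi'⟩ | ⟨r, hr⟩
    · simp only [legV, Sum.inr.injEq, Sum.inl.injEq, Prod.mk.injEq] at hi'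
      exact otherLeg_ne hb2 j hi'.1.symm
    · simp [legV, incV] at hr
  have hctr : (ctr : SpiderV b σ rem) ∉
      ((univ.image (legV j)) ∪ (univ.image incV) ∪
        ((univ.filter (fun i : Fin σ => i.val + rem + 1 < σ)).image (legV (otherLeg hb2 j)))) := by
    simp only [mem_union, mem_image, mem_univ, true_and, mem_filter, not_or]
    refine ⟨⟨?_, ?_⟩, ?_⟩ <;> rintro ⟨i, hi⟩ <;> simp [ctr, legV, incV] at hi
  rw [Tset, card_insert_of_notMem hctr, card_union_of_disjoint hd2,
    card_union_of_disjoint hd1, card_image_of_injective _ (legV_injective j),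
    card_image_of_injective _ incV_injective,
    card_image_of_injective _ (legV_injective (otherLeg hb2 j)), hfilter,
    card_univ, card_univ, Fintype.card_fin, Fintype.card_fin]
  omega

end Spider

namespace Spider

variable {b σ rem : ℕ}

lemma Tset_down (hb2 : 2 ≤ b) (j jv : Fin b) (m : ℕ) (h1 : m + 1 < σ)
    (hmem : (legV jv ⟨m + 1, h1⟩ : SpiderV b σ rem) ∈ Tset hb2 j) :
    (legV jv ⟨m, by omega⟩ : SpiderV b σ rem) ∈ Tset hb2 j := by
  rw [mem_Tset_iff] at hmem ⊢
  rcases hmem with h | ⟨i, h⟩ | ⟨r, h⟩ | ⟨i, hi, h⟩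
  · simp [legV, ctr] at h
  · simp only [legV, Sum.inr.injEq, Sum.inl.injEq, Prod.mk.injEq] at h
    exact Or.inr (Or.inl ⟨⟨m, by omega⟩, by rw [h.1]⟩)
  · simp [legV, incV] at h
  · simp only [legV, Sum.inr.injEq, Sum.inl.injEq, Prod.mk.injEq] at h
    obtain ⟨rfl, hieq⟩ := h
    have : (i : ℕ) = m + 1 := by rw [← hieq]
    refine Or.inr (Or.inr (Or.inr ⟨⟨m, by omega⟩, show m + rem + 1 < σ by omega, rfl⟩))

lemma adj_leg0_ctr (hσ : 0 < σ) (jv : Fin b) :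
    (spiderGraph b σ rem).Adj (legV jv ⟨0, hσ⟩) ctr :=
  ⟨by simp [legV, ctr], Or.inr rfl⟩

lemma adj_leg_succ (jv : Fin b) (m : ℕ) (h1 : m + 1 < σ) :
    (spiderGraph b σ rem).Adj (legV jv ⟨m + 1, h1⟩) (legV jv ⟨m, by omega⟩) :=
  ⟨by simp [legV, Fin.ext_iff], Or.inr ⟨rfl, rfl⟩⟩

lemma adj_inc0_ctr (hr : 0 < rem) :
    (spiderGraph b σ rem).Adj (incV ⟨0, hr⟩) ctr :=
  ⟨by simp [incV, ctr], Or.inr rfl⟩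

lemma adj_inc_succ (m : ℕ) (h1 : m + 1 < rem) :
    (spiderGraph b σ rem).Adj (incV (b := b) (σ := σ) ⟨m + 1, h1⟩) (incV ⟨m, by omega⟩) :=
  ⟨by simp [incV, Fin.ext_iff], Or.inr rfl⟩

lemma Tset_connected (hb2 : 2 ≤ b) (hσ : 0 < σ) (j : Fin b) :
    ((spiderGraph b σ rem).induce ((Tset hb2 j : Finset (SpiderV b σ rem)) :
      Set (SpiderV b σ rem))).Connected := by
  set G' := (spiderGraph b σ rem).induce ((Tset hb2 j : Finset (SpiderV b σ rem)) :
      Set (SpiderV b σ rem)) with hG'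
  have hc : (ctr : SpiderV b σ rem) ∈ ((Tset hb2 j : Finset (SpiderV b σ rem)) :
      Set (SpiderV b σ rem)) := ctr_mem_Tset hb2 j
  have hleg : ∀ (jv : Fin b) (m : ℕ) (hm : m < σ)
      (hmem : (legV jv ⟨m, hm⟩ : SpiderV b σ rem) ∈ Tset hb2 j),
      G'.Reachable ⟨legV jv ⟨m, hm⟩, hmem⟩ ⟨ctr, hc⟩ := by
    intro jv m
    induction m with
    | zero =>
      intro hm hmem
      exact SimpleGraph.Adj.reachable (adj_leg0_ctr hσ jv)
    | succ m ih =>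
      intro hm hmem
      have hmem' := Tset_down hb2 j jv m hm hmem
      exact SimpleGraph.Reachable.trans
        (SimpleGraph.Adj.reachable
          (show G'.Adj ⟨legV jv ⟨m + 1, hm⟩, hmem⟩ ⟨legV jv ⟨m, by omega⟩, hmem'⟩ from
            adj_leg_succ jv m hm))
        (ih (by omega) hmem')
  have hinc : ∀ (m : ℕ) (hm : m < rem)
      (hmem : (incV ⟨m, hm⟩ : SpiderV b σ rem) ∈ Tset hb2 j),
      G'.Reachable ⟨incV ⟨m, hm⟩, hmem⟩ ⟨ctr, hc⟩ := by
    intro m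
    induction m with
    | zero =>
      intro hm hmem
      exact SimpleGraph.Adj.reachable (adj_inc0_ctr hm)
    | succ m ih =>
      intro hm hmem
      have hmem' : (incV ⟨m, by omega⟩ : SpiderV b σ rem) ∈ Tset hb2 j :=
        inc_mem_Tset hb2 j _
      exact SimpleGraph.Reachable.trans
        (SimpleGraph.Adj.reachable
          (show G'.Adj ⟨incV ⟨m + 1, hm⟩, hmem⟩ ⟨incV ⟨m, by omega⟩, hmem'⟩ from
            adj_inc_succ m hm))
        (ih (by omega) hmem')
  have key : ∀ v : ↥((Tset hb2 j : Finset (SpiderV b σ rem)) : Set (SpiderV b σ rem)),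
      G'.Reachable v ⟨ctr, hc⟩ := by
    rintro ⟨(⟨⟩ | ⟨⟨jv, iv⟩ | rv⟩), hv⟩
    · exact SimpleGraph.Reachable.refl _
    · exact hleg jv iv.val iv.2 hv
    · exact hinc rv.val rv.2 hv
  rw [SimpleGraph.connected_iff]
  exact ⟨fun u v => (key u).trans (key v).symm, ⟨⟨ctr, hc⟩⟩⟩

end Spider

namespace Spider

variable {b σ rem : ℕ}

lemma exists_mem_Tset (hb2 : 2 ≤ b) (v : SpiderV b σ rem) : ∃ j, v ∈ Tset hb2 j := by
  rcases v with _ | ⟨⟨jv, iv⟩ | rv⟩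
  · exact ⟨⟨0, by omega⟩, ctr_mem_Tset hb2 _⟩
  · exact ⟨jv, leg_mem_Tset hb2 jv iv⟩
  · exact ⟨⟨0, by omega⟩, inc_mem_Tset hb2 _ rv⟩

noncomputable def qstrat (hb2 : 2 ≤ b) (σ rem : ℕ) : Finset (SpiderV b σ rem) → ℝ :=
  fun s => ((univ.filter fun j : Fin b => Tset hb2 j = s).card : ℝ) / b

lemma qstrat_isDefStrat (hb2 : 2 ≤ b) (hσ : 0 < σ) (hσrem : rem + 1 ≤ σ) :
    IsDefStrat (spiderGraph b σ rem) (2 * σ) (qstrat hb2 σ rem) := by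
  refine ⟨fun s => by unfold qstrat; positivity, fun s hs => ?_, ?_⟩
  · have hne : (univ.filter fun j : Fin b => Tset hb2 j = s).Nonempty := by
      rw [Finset.nonempty_iff_ne_empty]
      intro hc
      apply hs
      simp [qstrat, hc]
    obtain ⟨j, hj⟩ := hne
    simp only [mem_filter, mem_univ, true_and] at hj
    subst hj
    exact ⟨card_Tset hb2 hσrem j, Tset_connected hb2 hσ j⟩
  · unfold qstrat
    rw [← Finset.sum_div]
    have hnat : ∑ s : Finset (SpiderV b σ rem),
        ((univ.filter fun j : Fin b => Tset hb2 j = s).card : ℝ) = (b : ℝ) := by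
      have := Finset.card_eq_sum_card_fiberwise
        (f := fun j : Fin b => Tset hb2 j) (t := (univ : Finset (Finset (SpiderV b σ rem))))
        (s := univ) (fun j _ => mem_univ _)
      rw [card_univ, Fintype.card_fin] at this
      rw [← Nat.cast_sum, ← this]
    rw [hnat, div_self (ne_of_gt (Nat.cast_pos.mpr (by omega : 0 < b)))]

lemma qstrat_vertexProb_ge (hb2 : 2 ≤ b) (v : SpiderV b σ rem) :
    1 / (b : ℝ) ≤ vertexProb (qstrat hb2 σ rem) v := by
  obtain ⟨j0, hj0⟩ := exists_mem_Tset hb2 v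
  have hterm : 1 / (b : ℝ) ≤ (if v ∈ Tset hb2 j0 then qstrat hb2 σ rem (Tset hb2 j0) else 0) := by
    rw [if_pos hj0]
    unfold qstrat
    have h1 : (1 : ℝ) ≤ ((univ.filter fun j : Fin b =>
        Tset hb2 j = Tset (σ := σ) (rem := rem) hb2 j0).card : ℝ) := by
      have : j0 ∈ univ.filter fun j : Fin b => Tset hb2 j = Tset (σ := σ) (rem := rem) hb2 j0 := by simp
      have := Finset.card_pos.mpr ⟨j0, this⟩
      exact_mod_cast this
    have hb0 : (0:ℝ) < b := Nat.cast_pos.mpr (by omega)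
    rw [div_le_div_iff₀ hb0 hb0]
    nlinarith
  refine hterm.trans ?_
  exact Finset.single_le_sum (f := fun s => if v ∈ s then qstrat hb2 σ rem s else 0)
    (fun s _ => by by_cases h : v ∈ s <;> simp [h, qstrat] <;> positivity) (mem_univ _)

lemma iInf_le_inv_b (hσ : 0 < σ) (hb1 : 0 < b) {q : Finset (SpiderV b σ rem) → ℝ}
    (hq : IsDefStrat (spiderGraph b σ rem) (2 * σ) q) :
    ⨅ i, vertexProb q i ≤ 1 / (b : ℝ) := by
  obtain ⟨hq0, hqsub, hqsum⟩ := hq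
  set I := ⨅ i, vertexProb q i with hI
  have hIle : ∀ j : Fin b, I ≤ vertexProb q (leafV hσ j) := fun j =>
    ciInf_le (Set.Finite.bddBelow (Set.finite_range _)) _
  have h1 : (b : ℝ) * I ≤ ∑ j : Fin b, vertexProb q (leafV hσ j) := by
    calc (b:ℝ) * I = (univ : Finset (Fin b)).card • I := by
          rw [card_univ, Fintype.card_fin, nsmul_eq_mul]
      _ ≤ ∑ j : Fin b, vertexProb q (leafV hσ j) :=
          Finset.card_nsmul_le_sum _ _ _ (fun j _ => hIle j)
  have h2 : ∑ j : Fin b, vertexProb q (leafV hσ j) ≤ 1 := by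
    rw [← hqsum]
    unfold vertexProb
    rw [Finset.sum_comm]
    apply Finset.sum_le_sum
    intro s _
    by_cases hqs : q s = 0
    · simp [hqs]
    · obtain ⟨hcard, hconn⟩ := hqsub s hqs
      have hone : (univ.filter fun j : Fin b => leafV hσ j ∈ s).card ≤ 1 := by
        rw [Finset.card_le_one]
        intro j hj j' hj'
        simp only [mem_filter, mem_univ, true_and] at hj hj'
        by_contra hne
        exact no_two_leaves hσ hcard hconn hne hj hj'
      calc ∑ j : Fin b, (if leafV hσ j ∈ s then q s else 0)
          = (univ.filter fun j : Fin b => leafV hσ j ∈ s).card • q s := by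
            rw [← Finset.sum_filter, Finset.sum_const]
        _ ≤ 1 * q s := by
            rw [nsmul_eq_mul]
            exact mul_le_mul_of_nonneg_right (by exact_mod_cast hone) (hq0 s)
        _ = q s := one_mul _
  have hb0 : (0:ℝ) < b := by exact_mod_cast hb1
  rw [le_div_iff₀ hb0]
  nlinarith

end Spider


theorem stmt13 (n lam σ b rem : ℕ) (h2 : 2 ≤ lam) (h3 : lam ≤ n - 1) (h4 : 3 ≤ n)
    (heven : lam = 2 * σ) (hb : b = (n - 1) / σ) (hrem : rem = n - 1 - b * σ)
    (hn : n = 1 + b * σ + rem) :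
    pstar (spiderGraph b σ rem) lam = 1 / b := by
  subst heven
  have hσ : 0 < σ := by omega
  have hb2 : 2 ≤ b := by
    rw [hb, Nat.le_div_iff_mul_le hσ]
    omega
  have hσrem : rem + 1 ≤ σ := by
    have h1 : b * σ + (n - 1) % σ = n - 1 := by
      rw [hb, mul_comm]; exact Nat.div_add_mod _ _
    have hml := Nat.mod_lt (n - 1) hσ
    omega
  have hb0 : (0:ℝ) < b := by exact_mod_cast (by omega : 0 < b)
  have hmem : (1 / (b:ℝ)) ∈
      {x : ℝ | ∃ q, IsDefStrat (spiderGraph b σ rem) (2 * σ) q ∧ x = ⨅ i, vertexProb q i} := by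
    refine ⟨Spider.qstrat hb2 σ rem, Spider.qstrat_isDefStrat hb2 hσ hσrem, ?_⟩
    refine le_antisymm (le_ciInf fun i => Spider.qstrat_vertexProb_ge hb2 i) ?_
    exact Spider.iInf_le_inv_b hσ (by omega) (Spider.qstrat_isDefStrat hb2 hσ hσrem)
  have hub : ∀ x ∈ {x : ℝ | ∃ q, IsDefStrat (spiderGraph b σ rem) (2 * σ) q ∧
      x = ⨅ i, vertexProb q i}, x ≤ 1 / (b:ℝ) := by
    rintro x ⟨q, hq, rfl⟩
    exact Spider.iInf_le_inv_b hσ (by omega) hq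
  unfold pstar
  exact le_antisymm (csSup_le ⟨_, hmem⟩ hub) (le_csSup ⟨_, hub⟩ hmem)
end
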